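/- arXiv:2408.10005 — 5 statements merged into one kernel-verified Lean document; each statement's English description precedes it below -/
import Mathlib

section
/- Let q be a prime power and let integers satisfy 0 = u_0 < 1 = u_1 < u_2 < ... < u_s < u_{s+1} = k and 2 ≤ s ≤ t + 1. Set n = t(q^k - 1)/(q - 1) - Σ_{i=2}^{s} (q^{u_i} - 1)/(q - 1) + 1 and d = t·q^{k-1} - Σ_{i=2}^{s} q^{u_i - 1}. Then there exists an [n,k]_q linear code C with minimum Hamming distance d whose weight distribution is: A_0(C) = 1; A_d(C) = q^{k-1} - q^{k-u_2}; A_{d+1}(C) = q^k - q^{k-1}; for each 2 ≤ l ≤ s, A_{w_l}(C) = q^{k-u_l} - q^{k-u_{l+1}} where w_l = d + Σ_{i=2}^{l} q^{u_i - 1} (so in particular A_{w_s}(C) = q^{k-u_s} - 1 since u_{s+1} = k); and A_j(C) = 0 for every other j. -/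
set_option linter.unusedSectionVars false
set_option linter.unusedVariables false


open Finset

/-- The Hamming weight of a vector. -/
noncomputable def hwt {F : Type} [Zero F] {n : ℕ} (c : Fin n → F) : ℕ :=
  Nat.card {i : Fin n // c i ≠ 0}

/-- The subcode support weight of a subspace of `F^n`. -/
noncomputable def suppWt {F : Type} [Field F] {n : ℕ} (X : Submodule F (Fin n → F)) : ℕ :=
  Nat.card {i : Fin n // ∃ x ∈ X, x i ≠ 0}

/-- The minimum Hamming distance of a linear code. -/
noncomputable def minDist {F : Type} [Field F] {n : ℕ} (C : Submodule F (Fin n → F)) : ℕ :=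
  sInf {w | ∃ c ∈ C, c ≠ 0 ∧ hwt c = w}

/-- The `r`-th generalized Hamming weight of a linear code. -/
noncomputable def ghw {F : Type} [Field F] {n : ℕ} (C : Submodule F (Fin n → F)) (r : ℕ) : ℕ :=
  sInf {w | ∃ U : Submodule F (Fin n → F), U ≤ C ∧ Module.finrank F ↥U = r ∧ suppWt U = w}

/-- `sswd C r j` = the number of `r`-dimensional subspaces `U` of `C` with support weight `j`. -/
noncomputable def sswd {F : Type} [Field F] {n : ℕ} (C : Submodule F (Fin n → F)) (r j : ℕ) : ℕ :=
  Nat.card {U : Submodule F (Fin n → F) // U ≤ C ∧ Module.finrank F ↥U = r ∧ suppWt U = j}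

/-- `wdist C j` = the number of codewords of `C` of Hamming weight `j`. -/
noncomputable def wdist {F : Type} [Field F] {n : ℕ} (C : Submodule F (Fin n → F)) (j : ℕ) : ℕ :=
  Nat.card {c : Fin n → F // c ∈ C ∧ hwt c = j}

/-- The q-ary Gaussian binomial coefficient `[k choose r]_q`. -/
def gbinom (q k r : ℕ) : ℕ :=
  (∏ i ∈ Finset.range r, (q ^ k - q ^ i)) / (∏ i ∈ Finset.range r, (q ^ r - q ^ i))

/-- Ceiling division of naturals: `cdiv a b = ⌈a/b⌉`. -/
def cdiv (a b : ℕ) : ℕ := (a + b - 1) / b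


namespace Stmt6Aux

variable {F : Type} [Field F] [Fintype F]

/-- dot product as a linear map in the second argument: `dotL v x = ∑ j, x j * v j`. -/
noncomputable def dotL {ι : Type} [Fintype ι] (v : ι → F) : (ι → F) →ₗ[F] F where
  toFun x := ∑ j, x j * v j
  map_add' a b := by simp [add_mul, Finset.sum_add_distrib]
  map_smul' c a := by simp [Finset.mul_sum, mul_assoc]

lemma dotL_apply {ι : Type} [Fintype ι] (v x : ι → F) : dotL v x = ∑ j, x j * v j := rfl

lemma dotL_single {ι : Type} [Fintype ι] [DecidableEq ι] (v : ι → F) (i : ι) :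
    dotL v (Pi.single i (1:F)) = v i := by
  classical
  simp [dotL_apply, Pi.single_apply, ite_mul]

lemma dotL_comm {ι : Type} [Fintype ι] (v x : ι → F) : dotL v x = dotL x v := by
  simp [dotL_apply, mul_comm]

/-- number of vectors where a nonzero linear functional is nonzero -/
lemma card_functional_ne {ι : Type} [Fintype ι] (φ : (ι → F) →ₗ[F] F) (hφ : φ ≠ 0) :
    Nat.card {y : ι → F // φ y ≠ 0}
      = Fintype.card F ^ Fintype.card ι - Fintype.card F ^ (Fintype.card ι - 1) := by
  classical
  obtain ⟨y0, hy0⟩ : ∃ y0, φ y0 ≠ 0 := by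
    by_contra h
    push_neg at h
    exact hφ (LinearMap.ext fun y => h y)
  have hsurj : Function.Surjective φ := fun b =>
    ⟨(b * (φ y0)⁻¹) • y0, by simp [mul_assoc, inv_mul_cancel₀ hy0]⟩
  have hrange : LinearMap.range φ = ⊤ := LinearMap.range_eq_top.mpr hsurj
  have hkerrank : Module.finrank F (LinearMap.ker φ) = Fintype.card ι - 1 := by
    have := LinearMap.finrank_range_add_finrank_ker φ
    rw [hrange, finrank_top, Module.finrank_self, Module.finrank_pi] at this
    omega
  have hcardker : Fintype.card (LinearMap.ker φ) = Fintype.card F ^ (Fintype.card ι - 1) := by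
    rw [Module.card_eq_pow_finrank (K := F), hkerrank]
  have : Fintype.card {y : ι → F // φ y ≠ 0}
      = Fintype.card (ι → F) - Fintype.card {y : ι → F // φ y = 0} :=
    Fintype.card_subtype_compl _
  have h2 : Fintype.card {y : ι → F // φ y = 0} = Fintype.card F ^ (Fintype.card ι - 1) := by
    rw [← hcardker]
    exact Fintype.card_congr (Equiv.subtypeEquivRight fun y => (LinearMap.mem_ker).symm).symm
  rw [Nat.card_eq_fintype_card, this, h2, Fintype.card_fun]


/-- vectors supported on `p` are equivalent to functions on the subtype -/
def windowEquiv {k : ℕ} (p : Fin k → Prop) [DecidablePred p] :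
    {v : Fin k → F // ∀ j, ¬ p j → v j = 0} ≃ ({j : Fin k // p j} → F) where
  toFun v i := v.1 i.1
  invFun y := ⟨fun j => if h : p j then y ⟨j, h⟩ else 0, fun j hj => dif_neg hj⟩
  left_inv v := by
    apply Subtype.ext
    funext j
    by_cases h : p j <;> simp [h, v.2 j]
  right_inv y := by funext i; simp [i.2]

lemma card_subtype_lt {k u : ℕ} (hu : u ≤ k) :
    Nat.card {j : Fin k // (j : ℕ) < u} = u := by
  have e : {j : Fin k // (j : ℕ) < u} ≃ Fin u :=
    { toFun := fun j => ⟨j.1.1, j.2⟩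
      invFun := fun i => ⟨⟨i.1, lt_of_lt_of_le i.2 hu⟩, i.2⟩
      left_inv := fun j => by ext; rfl
      right_inv := fun i => rfl }
  rw [Nat.card_congr e, Nat.card_eq_fintype_card, Fintype.card_fin]

lemma card_subtype_not_lt {k u : ℕ} (hu : u ≤ k) :
    Nat.card {j : Fin k // ¬ ((j : ℕ) < u)} = k - u := by
  have e : {j : Fin k // ¬ ((j : ℕ) < u)} ≃ Fin (k - u) :=
    { toFun := fun j => ⟨j.1.1 - u, by have := j.1.2; have := j.2; omega⟩
      invFun := fun i => ⟨⟨i.1 + u, by have := i.2; omega⟩, by simp⟩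
      left_inv := fun j => by
        ext
        have := j.2
        simp only []
        omega
      right_inv := fun i => by
        ext
        simp }
  rw [Nat.card_congr e, Nat.card_eq_fintype_card, Fintype.card_fin]

/-- cardinality of the window space -/
lemma card_window {k u : ℕ} (hu : u ≤ k) :
    Nat.card {v : Fin k → F // ∀ j : Fin k, ¬ ((j : ℕ) < u) → v j = 0}
      = Fintype.card F ^ u := by
  classical
  have hc : Fintype.card {j : Fin k // (j : ℕ) < u} = u := by
    rw [← Nat.card_eq_fintype_card]; exact card_subtype_lt hu
  rw [Nat.card_congr (windowEquiv (fun j : Fin k => (j : ℕ) < u)), Nat.card_eq_fintype_card,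
    Fintype.card_fun, hc]

/-- number of window vectors with nonzero dot product against `x`,
when `x` does not vanish on the window -/
lemma card_window_dot_ne {k u : ℕ} (hu : u ≤ k) (x : Fin k → F)
    (hx : ∃ j : Fin k, (j : ℕ) < u ∧ x j ≠ 0) :
    Nat.card {v : Fin k → F //
        (∀ j : Fin k, ¬ ((j : ℕ) < u) → v j = 0) ∧ dotL x v ≠ 0}
      = Fintype.card F ^ u - Fintype.card F ^ (u - 1) := by
  classical
  set p : Fin k → Prop := fun j => (j : ℕ) < u with hp
  -- transfer to the window
  have e1 : {v : Fin k → F // (∀ j : Fin k, ¬ p j → v j = 0) ∧ dotL x v ≠ 0}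
      ≃ {w : {v : Fin k → F // ∀ j : Fin k, ¬ p j → v j = 0} // dotL x w.1 ≠ 0} :=
    (Equiv.subtypeSubtypeEquivSubtypeInter _ _).symm
  have e2 : {w : {v : Fin k → F // ∀ j : Fin k, ¬ p j → v j = 0} // dotL x w.1 ≠ 0}
      ≃ {y : ({j : Fin k // p j} → F) // dotL (fun i => x i.1) y ≠ 0} := by
    apply (Equiv.subtypeEquiv (windowEquiv p))
    intro v
    have : dotL x v.1 = dotL (fun i : {j : Fin k // p j} => x i.1) (windowEquiv p v) := by
      rw [dotL_apply, dotL_apply]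
      rw [← Finset.sum_filter_add_sum_filter_not Finset.univ p (fun j => v.1 j * x j)]
      have hz : ∑ j ∈ Finset.univ.filter (fun j => ¬ p j), v.1 j * x j = 0 := by
        apply Finset.sum_eq_zero
        intro j hj
        rw [Finset.mem_filter] at hj
        rw [v.2 j hj.2, zero_mul]
      rw [hz, add_zero]
      rw [Finset.sum_subtype (p := p) (Finset.univ.filter p)
        (fun j => by simp [Finset.mem_filter]) (fun j => v.1 j * x j)]
      rfl
    rw [this]
  rw [Nat.card_congr (e1.trans e2)]
  have hcard : Fintype.card {j : Fin k // p j} = u := by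
    rw [← Nat.card_eq_fintype_card, hp, card_subtype_lt hu]
  rw [card_functional_ne _ ?_, hcard]
  -- the restricted functional is nonzero
  obtain ⟨j, hj, hxj⟩ := hx
  intro hzero
  have := congrFun (congrArg DFunLike.coe hzero) (Pi.single (⟨j, hj⟩ : {j : Fin k // p j}) 1)
  rw [dotL_single] at this
  exact hxj this

/-- number of nonzero window vectors -/
lemma card_window_ne_zero {k u : ℕ} (hu : u ≤ k) (hu0 : 1 ≤ u) :
    Nat.card {v : Fin k → F // (∀ j : Fin k, ¬ ((j : ℕ) < u) → v j = 0) ∧ v ≠ 0}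
      = Fintype.card F ^ u - 1 := by
  classical
  have e1 : {v : Fin k → F // (∀ j : Fin k, ¬ ((j : ℕ) < u) → v j = 0) ∧ v ≠ 0}
      ≃ {w : {v : Fin k → F // ∀ j : Fin k, ¬ ((j:ℕ) < u) → v j = 0} // w ≠ ⟨0, fun _ _ => rfl⟩} := by
    refine (Equiv.subtypeSubtypeEquivSubtypeInter _ _).symm.trans (Equiv.subtypeEquiv (Equiv.refl _) ?_)
    intro w
    simp [Subtype.ext_iff]
  rw [Nat.card_congr e1, Nat.card_eq_fintype_card]
  have h1 : Fintype.card {w : {v : Fin k → F // ∀ j : Fin k, ¬ ((j:ℕ) < u) → v j = 0} //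
      w = ⟨0, fun _ _ => rfl⟩} = 1 := Fintype.card_subtype_eq _
  have h2 := Fintype.card_subtype_compl
    (fun w : {v : Fin k → F // ∀ j : Fin k, ¬ ((j:ℕ) < u) → v j = 0} => w = ⟨0, fun _ _ => rfl⟩)
  rw [h1] at h2
  rw [h2, ← Nat.card_eq_fintype_card, card_window hu]


/-- a vector is normalized if its top nonzero coordinate equals 1 -/
def Nml {k : ℕ} (v : Fin k → F) : Prop :=
  ∃ j, v j = 1 ∧ ∀ i, j < i → v i = 0

open Classical in
noncomputable def topIdx {k : ℕ} (v : Fin k → F) (hv : v ≠ 0) : Fin k :=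
  (Finset.univ.filter (fun j => v j ≠ 0)).max' (by
    obtain ⟨j, hj⟩ := Function.ne_iff.mp hv
    exact ⟨j, Finset.mem_filter.mpr ⟨Finset.mem_univ _, by simpa using hj⟩⟩)

open Classical in
lemma topIdx_spec {k : ℕ} (v : Fin k → F) (hv : v ≠ 0) :
    v (topIdx v hv) ≠ 0 ∧ ∀ i, topIdx v hv < i → v i = 0 := by
  have hne : (Finset.univ.filter (fun j => v j ≠ 0)).Nonempty := by
    obtain ⟨j, hj⟩ := Function.ne_iff.mp hv
    exact ⟨j, Finset.mem_filter.mpr ⟨Finset.mem_univ _, by simpa using hj⟩⟩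
  constructor
  · have := Finset.max'_mem (Finset.univ.filter (fun j => v j ≠ 0)) hne
    rw [Finset.mem_filter] at this
    exact this.2
  · intro i hi
    by_contra hvi
    have hmem : i ∈ Finset.univ.filter (fun j => v j ≠ 0) := by
      exact Finset.mem_filter.mpr ⟨Finset.mem_univ _, hvi⟩
    have := Finset.le_max' _ i hmem
    exact absurd (lt_of_lt_of_le hi this) (lt_irrefl _)

lemma topIdx_unique {k : ℕ} (v : Fin k → F) (hv : v ≠ 0) (j : Fin k)
    (h1 : v j ≠ 0) (h2 : ∀ i, j < i → v i = 0) : topIdx v hv = j := by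
  obtain ⟨ht1, ht2⟩ := topIdx_spec v hv
  rcases lt_trichotomy (topIdx v hv) j with h | h | h
  · exact absurd (ht2 _ h) h1
  · exact h
  · exact absurd (h2 _ h) ht1

/-- scaling lemma: the count of vectors satisfying a scaling-invariant property equals
`(q-1)` times the number of normalized ones. -/
lemma card_scale {k : ℕ} (P : (Fin k → F) → Prop)
    (h0 : ∀ v, P v → v ≠ 0)
    (hsc : ∀ (c : Fˣ) v, P v → P ((c : F) • v)) :
    Nat.card {v : Fin k → F // P v}
      = (Fintype.card F - 1) * Nat.card {v : Fin k → F // P v ∧ Nml v} := by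
  classical
  have key : ∀ (c : F), c ≠ 0 → ∀ v, P v → P (c • v) := by
    intro c hc v hv
    exact hsc (Units.mk0 c hc) v hv
  have e : Fˣ × {v : Fin k → F // P v ∧ Nml v} ≃ {v : Fin k → F // P v} := by
    refine
    { toFun := fun p => ⟨(p.1 : F) • p.2.1, hsc p.1 p.2.1 p.2.2.1⟩
      invFun := fun v =>
        (Units.mk0 (v.1 (topIdx v.1 (h0 v.1 v.2))) (topIdx_spec v.1 (h0 v.1 v.2)).1,
          ⟨(v.1 (topIdx v.1 (h0 v.1 v.2)))⁻¹ • v.1,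
            key _ (inv_ne_zero (topIdx_spec v.1 (h0 v.1 v.2)).1) v.1 v.2,
            ⟨topIdx v.1 (h0 v.1 v.2), by
              simp [inv_mul_cancel₀ (topIdx_spec v.1 (h0 v.1 v.2)).1],
              fun i hi => by simp [(topIdx_spec v.1 (h0 v.1 v.2)).2 i hi]⟩⟩)
      left_inv := ?_
      right_inv := ?_ }
    · rintro ⟨c, ⟨v, hP, j, hj1, hj2⟩⟩
      have hPcv := hsc c v hP
      have hcv : (c : F) • v ≠ 0 := h0 _ hPcv
      have htop : topIdx ((c : F) • v) hcv = j := by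
        apply topIdx_unique
        · simp [hj1, c.ne_zero]
        · intro i hi
          simp [hj2 i hi]
      have hval : ((c : F) • v) (topIdx ((c : F) • v) hcv) = (c : F) := by
        rw [htop]; simp [hj1]
      have e1 : Units.mk0 (((c : F) • v) (topIdx ((c : F) • v) hcv))
          (topIdx_spec _ hcv).1 = c := Units.ext (by simpa using hval)
      have e2 : (((c : F) • v) (topIdx ((c : F) • v) hcv))⁻¹ • ((c : F) • v) = v := by
        rw [hval, smul_smul, inv_mul_cancel₀ c.ne_zero, one_smul]
      simp only [Prod.mk.injEq]
      exact ⟨e1, Subtype.ext e2⟩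
    · rintro ⟨v, hP⟩
      apply Subtype.ext
      simp only [Units.val_mk0]
      rw [smul_smul, mul_inv_cancel₀ (topIdx_spec v (h0 v hP)).1, one_smul]
  rw [← Nat.card_congr e, Nat.card_eq_fintype_card, Fintype.card_prod, Fintype.card_units,
    Nat.card_eq_fintype_card]


/-- normalized vectors in the window `[0,u)` -/
def NW {k : ℕ} (u : ℕ) (v : Fin k → F) : Prop :=
  (∀ j : Fin k, ¬ ((j : ℕ) < u) → v j = 0) ∧ Nml v

lemma one_lt_cardF : 1 < Fintype.card F := Fintype.one_lt_card

lemma card_NW_mul {k u : ℕ} (hu : u ≤ k) (hu1 : 1 ≤ u) :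
    (Fintype.card F - 1) * Nat.card {v : Fin k → F // NW u v}
      = Fintype.card F ^ u - 1 := by
  classical
  have hsc : ∀ (c : Fˣ) (v : Fin k → F),
      ((∀ j : Fin k, ¬ ((j : ℕ) < u) → v j = 0) ∧ v ≠ 0) →
      ((∀ j : Fin k, ¬ ((j : ℕ) < u) → ((c : F) • v) j = 0) ∧ (c : F) • v ≠ 0) := by
    intro c v hv
    refine ⟨fun j hj => by simp [hv.1 j hj], ?_⟩
    simp only [ne_eq, smul_eq_zero, not_or]
    exact ⟨c.ne_zero, hv.2⟩
  have := card_scale (fun v : Fin k → F =>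
    (∀ j : Fin k, ¬ ((j : ℕ) < u) → v j = 0) ∧ v ≠ 0) (fun v hv => hv.2) hsc
  rw [card_window_ne_zero hu hu1] at this
  have hEq : Nat.card {v : Fin k → F // NW u v}
      = Nat.card {v : Fin k → F //
          ((∀ j : Fin k, ¬ ((j : ℕ) < u) → v j = 0) ∧ v ≠ 0) ∧ Nml v} := by
    apply Nat.card_congr
    apply Equiv.subtypeEquivRight
    intro v
    unfold NW
    constructor
    · rintro ⟨h1, h2⟩
      refine ⟨⟨h1, ?_⟩, h2⟩
      obtain ⟨j, hj1, _⟩ := h2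
      intro h0
      rw [h0] at hj1
      simp at hj1
    · rintro ⟨⟨h1, _⟩, h2⟩
      exact ⟨h1, h2⟩
  rw [hEq]
  exact this.symm

lemma card_NW_dot_mul {k u : ℕ} (hu : u ≤ k) (x : Fin k → F)
    (hx : ∃ j : Fin k, (j : ℕ) < u ∧ x j ≠ 0) :
    (Fintype.card F - 1) * Nat.card {v : Fin k → F // NW u v ∧ dotL x v ≠ 0}
      = Fintype.card F ^ u - Fintype.card F ^ (u - 1) := by
  classical
  have hsc : ∀ (c : Fˣ) (v : Fin k → F),
      ((∀ j : Fin k, ¬ ((j : ℕ) < u) → v j = 0) ∧ dotL x v ≠ 0) →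
      ((∀ j : Fin k, ¬ ((j : ℕ) < u) → ((c : F) • v) j = 0) ∧ dotL x ((c : F) • v) ≠ 0) := by
    intro c v hv
    refine ⟨fun j hj => by simp [hv.1 j hj], ?_⟩
    rw [map_smul]
    simp only [smul_eq_mul, ne_eq, mul_eq_zero, not_or]
    exact ⟨c.ne_zero, hv.2⟩
  have h0 : ∀ v : Fin k → F,
      ((∀ j : Fin k, ¬ ((j : ℕ) < u) → v j = 0) ∧ dotL x v ≠ 0) → v ≠ 0 := by
    intro v hv h
    apply hv.2
    rw [h, map_zero]
  have := card_scale (fun v : Fin k → F =>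
    (∀ j : Fin k, ¬ ((j : ℕ) < u) → v j = 0) ∧ dotL x v ≠ 0) h0 hsc
  rw [card_window_dot_ne hu x hx] at this
  have hEq : Nat.card {v : Fin k → F // NW u v ∧ dotL x v ≠ 0}
      = Nat.card {v : Fin k → F //
          ((∀ j : Fin k, ¬ ((j : ℕ) < u) → v j = 0) ∧ dotL x v ≠ 0) ∧ Nml v} := by
    apply Nat.card_congr
    apply Equiv.subtypeEquivRight
    intro v
    unfold NW
    tauto
  rw [hEq]
  exact this.symm

lemma card_NW_dot {k u : ℕ} (hu : u ≤ k) (hu1 : 1 ≤ u) (x : Fin k → F)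
    (hx : ∃ j : Fin k, (j : ℕ) < u ∧ x j ≠ 0) :
    Nat.card {v : Fin k → F // NW u v ∧ dotL x v ≠ 0}
      = Fintype.card F ^ (u - 1) := by
  have hq : 1 < Fintype.card F := one_lt_cardF
  have key := card_NW_dot_mul hu x hx
  have hpow : Fintype.card F ^ u - Fintype.card F ^ (u - 1)
      = (Fintype.card F - 1) * Fintype.card F ^ (u - 1) := by
    have : Fintype.card F ^ u = Fintype.card F * Fintype.card F ^ (u - 1) := by
      rw [← pow_succ']
      congr 1
      omega
    rw [this, Nat.sub_one_mul, Nat.mul_comm]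
  rw [hpow] at key
  exact Nat.eq_of_mul_eq_mul_left (by omega) key

lemma card_NW_eq_div {k u : ℕ} (hu : u ≤ k) (hu1 : 1 ≤ u) :
    Nat.card {v : Fin k → F // NW u v}
      = (Fintype.card F ^ u - 1) / (Fintype.card F - 1) := by
  have hq : 1 < Fintype.card F := one_lt_cardF
  rw [← card_NW_mul hu hu1, Nat.mul_div_cancel_left _ (by omega)]

lemma card_NW_dot_zero {k u : ℕ} (x : Fin k → F)
    (hx : ∀ j : Fin k, (j : ℕ) < u → x j = 0) :
    Nat.card {v : Fin k → F // NW u v ∧ dotL x v ≠ 0} = 0 := by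
  have : IsEmpty {v : Fin k → F // NW u v ∧ dotL x v ≠ 0} := by
    refine ⟨fun ⟨v, hv⟩ => hv.2 ?_⟩
    rw [dotL_apply]
    apply Finset.sum_eq_zero
    intro j _
    by_cases h : (j : ℕ) < u
    · rw [hx j h, mul_zero]
    · rw [hv.1.1 j h, zero_mul]
  simp


open Classical in
lemma card_unit_subtype (P : Prop) : Nat.card {_u : Unit // P} = if P then 1 else 0 := by
  classical
  by_cases h : P
  · rw [if_pos h]
    rw [Nat.card_eq_one_iff_unique]
    exact ⟨⟨by rintro ⟨⟨⟩, _⟩ ⟨⟨⟩, _⟩; rfl⟩, ⟨⟨(), h⟩⟩⟩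
  · rw [if_neg h]
    have : IsEmpty {_u : Unit // P} := ⟨fun p => h p.2⟩
    simp

/-- counting a subtype of a sigma type where the predicate only involves the base -/
lemma card_sigma_subtype {A : Type} [Fintype A] (f : A → ℕ) (Q : A → Prop) [DecidablePred Q] :
    Nat.card {p : Σ a : A, Fin (f a) // Q p.1} = ∑ a ∈ Finset.univ.filter Q, f a := by
  classical
  have e : {p : Σ a : A, Fin (f a) // Q p.1} ≃ Σ a : {a : A // Q a}, Fin (f a.1) :=
    { toFun := fun p => ⟨⟨p.1.1, p.2⟩, p.1.2⟩
      invFun := fun p => ⟨⟨p.1.1, p.2⟩, p.1.2⟩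
      left_inv := fun ⟨⟨a, b⟩, h⟩ => rfl
      right_inv := fun ⟨⟨a, h⟩, b⟩ => rfl }
  rw [Nat.card_congr e, Nat.card_eq_fintype_card, Fintype.card_sigma]
  simp only [Fintype.card_fin]
  exact (Finset.sum_subtype (Finset.univ.filter Q) (fun a => by simp [Finset.mem_filter]) f).symm

section Construction

variable {F : Type} [Field F] [Fintype F]

open Classical in
/-- number of removed simplex subcodes containing `v` -/
noncomputable def cnt (k s : ℕ) (u : ℕ → ℕ) (v : Fin k → F) : ℕ :=
  ((Finset.Icc 2 s).filter (fun i => ∀ j : Fin k, ¬ ((j : ℕ) < u i) → v j = 0)).card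

/-- the index type for the columns of the generator matrix -/
noncomputable def colIdx (F : Type) [Field F] [Fintype F] (k s t : ℕ) (u : ℕ → ℕ) : Type :=
  (Σ v : {v : Fin k → F // NW k v}, Fin (t - cnt k s u v.1)) ⊕ Unit

noncomputable instance fintypeNWsub {k w : ℕ} : Fintype {v : Fin k → F // NW w v} :=
  Fintype.ofFinite _

noncomputable instance fintypeColIdx {k s t : ℕ} {u : ℕ → ℕ} :
    Fintype (colIdx F k s t u) := by
  unfold colIdx
  infer_instance

/-- the columns of the generator matrix -/
noncomputable def col {k s t : ℕ} {u : ℕ → ℕ} (i : colIdx F k s t u) : Fin k → F :=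
  Sum.elim (fun p : Σ v : {v : Fin k → F // NW k v}, Fin (t - cnt k s u v.1) => p.1.1)
    (fun _ => fun j => if (j : ℕ) = 0 then 1 else 0) i

/-- the encoding map -/
noncomputable def EncL (F : Type) [Field F] [Fintype F] (k s t : ℕ) (u : ℕ → ℕ) :
    (Fin k → F) →ₗ[F] (colIdx F k s t u → F) :=
  LinearMap.pi (fun i => dotL (col i))

/-- the weight of the codeword attached to a message `x` -/
noncomputable def WT (k s t : ℕ) (u : ℕ → ℕ) (x : Fin k → F) : ℕ :=
  Nat.card {i : colIdx F k s t u // EncL F k s t u x i ≠ 0}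

lemma WT_zero (k s t : ℕ) (u : ℕ → ℕ) : WT k s t u (0 : Fin k → F) = 0 := by
  have : IsEmpty {i : colIdx F k s t u // EncL F k s t u 0 i ≠ 0} := by
    refine ⟨fun p => p.2 ?_⟩
    exact congrFun (map_zero (EncL F k s t u)) p.1
  unfold WT
  simp


section Hyp

variable {k s t : ℕ} {u : ℕ → ℕ}

lemma umono (humono : ∀ i ∈ Finset.Icc 1 (s + 1), u (i - 1) < u i) :
    ∀ i j, i < j → j ≤ s + 1 → u i < u j := by
  intro i j hij hj
  induction j with
  | zero => omega
  | succ n ih =>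
    have hn : u n < u (n + 1) := by
      have := humono (n + 1) (Finset.mem_Icc.mpr ⟨by omega, by omega⟩)
      simpa using this
    rcases Nat.lt_or_ge i n with h | h
    · exact lt_trans (ih h (by omega)) hn
    · have : i = n := by omega
      subst this
      exact hn

open Classical in
/-- Master weight formula. -/
lemma WT_eq (hs : 2 ≤ s) (hst : s ≤ t + 1)
    (hu1 : u 1 = 1) (huk : u (s + 1) = k)
    (humono : ∀ i ∈ Finset.Icc 1 (s + 1), u (i - 1) < u i)
    (hk : 0 < k) (x : Fin k → F) (hx : x ≠ 0) :
    WT k s t u x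
      = t * Fintype.card F ^ (k - 1)
        - ∑ i ∈ Finset.Icc 2 s,
            (if ∃ j : Fin k, (j : ℕ) < u i ∧ x j ≠ 0 then Fintype.card F ^ (u i - 1) else 0)
        + (if x ⟨0, hk⟩ ≠ 0 then 1 else 0) := by
  classical
  have hmono := umono humono
  have huik : ∀ i, i ≤ s + 1 → u i ≤ k := by
    intro i hi
    rcases Nat.lt_or_ge i (s + 1) with h | h
    · exact le_of_lt (huk ▸ hmono i (s + 1) h (le_refl _))
    · have : i = s + 1 := by omega
      rw [this, huk]
  have hui1 : ∀ i, 1 ≤ i → i ≤ s + 1 → 1 ≤ u i := by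
    intro i h1 h2
    rcases Nat.lt_or_ge 1 i with h | h
    · have := hmono 1 i h h2
      omega
    · have : i = 1 := by omega
      rw [this, hu1]
  -- split off the extra coordinate
  have hsplit : WT k s t u x
      = Nat.card {p : (Σ v : {v0 : Fin k → F // NW k v0}, Fin (t - cnt k s u v.1)) //
          EncL F k s t u x (Sum.inl p) ≠ 0}
        + Nat.card {b : Unit // EncL F k s t u x (Sum.inr b) ≠ 0} := by
    unfold WT
    rw [← Nat.card_sum]
    exact Nat.card_congr Equiv.subtypeSum
  rw [hsplit]
  -- the extra-coordinate part
  have hw : ∀ b : Unit, EncL F k s t u x (Sum.inr b) = x ⟨0, hk⟩ := by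
    intro b
    show dotL (col (Sum.inr b)) x = _
    rw [dotL_apply]
    unfold col
    simp only [Sum.elim_inr]
    have hterm : ∀ j : Fin k, x j * (if (j : ℕ) = 0 then (1:F) else 0)
        = if j = ⟨0, hk⟩ then x j else 0 := by
      intro j
      by_cases h : (j : ℕ) = 0
      · have hj : j = ⟨0, hk⟩ := Fin.ext h
        simp [h, hj]
      · have hj : j ≠ ⟨0, hk⟩ := fun hq => h (by rw [hq])
        simp [h, hj]
    rw [Finset.sum_congr rfl (fun j _ => hterm j), Finset.sum_ite_eq' Finset.univ _ _]
    simp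
  have hpart2 : Nat.card {b : Unit // EncL F k s t u x (Sum.inr b) ≠ 0}
      = (if x ⟨0, hk⟩ ≠ 0 then 1 else 0) := by
    by_cases hx0 : x ⟨0, hk⟩ ≠ 0
    · rw [if_pos hx0, Nat.card_eq_one_iff_unique]
      refine ⟨⟨by rintro ⟨⟨⟩, _⟩ ⟨⟨⟩, _⟩; rfl⟩, ⟨⟨(), by rw [hw ()]; exact hx0⟩⟩⟩
    · rw [if_neg hx0]
      have : IsEmpty {b : Unit // EncL F k s t u x (Sum.inr b) ≠ 0} := by
        refine ⟨fun p => ?_⟩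
        apply p.2
        rw [hw p.1]
        push_neg at hx0
        exact hx0
      simp
  rw [hpart2]
  congr 1
  -- the main part
  have hEncl : ∀ p : Σ a : {v : Fin k → F // NW k v}, Fin (t - cnt k s u a.1),
      (EncL F k s t u x (Sum.inl p) ≠ 0) ↔ dotL x p.1.1 ≠ 0 := by
    intro p
    show dotL (col (Sum.inl p)) x ≠ 0 ↔ _
    unfold col
    simp only [Sum.elim_inl]
    rw [dotL_comm]
  rw [Nat.card_congr (Equiv.subtypeEquivRight hEncl)]
  rw [card_sigma_subtype (fun a : {v : Fin k → F // NW k v} => t - cnt k s u a.1) (fun a : {v : Fin k → F // NW k v} => dotL x a.1 ≠ 0)]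
  -- distribute the natural subtraction
  have hcnt_le : ∀ a : {v : Fin k → F // NW k v}, cnt k s u a.1 ≤ t := by
    intro a
    unfold cnt
    calc ((Finset.Icc 2 s).filter _).card ≤ (Finset.Icc 2 s).card := Finset.card_filter_le _ _
    _ ≤ t := by rw [Nat.card_Icc]; omega
  rw [Finset.sum_tsub_distrib _ (fun a _ => hcnt_le a)]
  rw [Finset.sum_const, smul_eq_mul]
  -- card of S
  have hxK : ∃ j : Fin k, (j : ℕ) < k ∧ x j ≠ 0 := by
    obtain ⟨j, hj⟩ := Function.ne_iff.mp hx
    exact ⟨j, j.2, by simpa using hj⟩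
  have hc0 : (Finset.univ.filter (fun a : {v : Fin k → F // NW k v} => dotL x a.1 ≠ 0)).card
      = Nat.card {a : {v : Fin k → F // NW k v} // dotL x a.1 ≠ 0} := by
    rw [Nat.card_eq_fintype_card, Fintype.card_subtype]
  have hc1 : Nat.card {a : {v : Fin k → F // NW k v} // dotL x a.1 ≠ 0}
      = Nat.card {v : Fin k → F // NW k v ∧ dotL x v ≠ 0} :=
    Nat.card_congr (Equiv.subtypeSubtypeEquivSubtypeInter (fun v : Fin k → F => NW k v)
      (fun v => dotL x v ≠ 0))
  have hScard : (Finset.univ.filter (fun a : {v : Fin k → F // NW k v} => dotL x a.1 ≠ 0)).card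
      = Fintype.card F ^ (k - 1) := by
    rw [hc0, hc1]
    exact card_NW_dot (le_refl k) hk x hxK
  -- the sum of cnt
  have hsum : ∑ a ∈ Finset.univ.filter (fun a : {v : Fin k → F // NW k v} => dotL x a.1 ≠ 0),
      cnt k s u a.1
      = ∑ i ∈ Finset.Icc 2 s,
          (if ∃ j : Fin k, (j : ℕ) < u i ∧ x j ≠ 0 then Fintype.card F ^ (u i - 1) else 0) := by
    have hcnt_expand : ∀ a : {v : Fin k → F // NW k v}, cnt k s u a.1
        = ∑ i ∈ Finset.Icc 2 s,
            (if (∀ j : Fin k, ¬ ((j : ℕ) < u i) → a.1 j = 0) then 1 else 0) := by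
      intro a
      unfold cnt
      rw [Finset.card_filter]
    rw [Finset.sum_congr rfl (fun a _ => hcnt_expand a), Finset.sum_comm]
    apply Finset.sum_congr rfl
    intro i hi
    rw [Finset.mem_Icc] at hi
    have hui_le : u i ≤ k := huik i (by omega)
    have hui_ge : 1 ≤ u i := hui1 i (by omega) (by omega)
    -- inner sum = card of the filtered set
    rw [← Finset.card_filter]
    have hcard2 : ((Finset.univ.filter (fun a : {v : Fin k → F // NW k v} => dotL x a.1 ≠ 0)).filter
        (fun a : {v : Fin k → F // NW k v} => ∀ j : Fin k, ¬ ((j : ℕ) < u i) → a.1 j = 0)).card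
        = Nat.card {v : Fin k → F // NW (u i) v ∧ dotL x v ≠ 0} := by
      have hc2 : ((Finset.univ.filter (fun a : {v : Fin k → F // NW k v} => dotL x a.1 ≠ 0)).filter
          (fun a : {v : Fin k → F // NW k v} => ∀ j : Fin k, ¬ ((j : ℕ) < u i) → a.1 j = 0)).card
          = Nat.card {a : {v : Fin k → F // NW k v} // dotL x a.1 ≠ 0 ∧ ∀ j : Fin k, ¬ ((j : ℕ) < u i) → a.1 j = 0} := by
        rw [Nat.card_eq_fintype_card, Fintype.card_subtype, Finset.filter_filter]
      rw [hc2]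
      apply Nat.card_congr
      refine (Equiv.subtypeSubtypeEquivSubtypeInter (fun v : Fin k → F => NW k v)
        (fun v => dotL x v ≠ 0 ∧ ∀ j : Fin k, ¬ ((j : ℕ) < u i) → v j = 0)).trans
        (Equiv.subtypeEquivRight ?_)
      intro v
      unfold NW
      constructor
      · rintro ⟨⟨_, hnml⟩, hdot, hwin⟩
        exact ⟨⟨hwin, hnml⟩, hdot⟩
      · rintro ⟨⟨hwin, hnml⟩, hdot⟩
        exact ⟨⟨fun j hj => absurd j.2 hj, hnml⟩, hdot, hwin⟩
    rw [hcard2]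
    by_cases hcase : ∃ j : Fin k, (j : ℕ) < u i ∧ x j ≠ 0
    · rw [if_pos hcase]
      exact card_NW_dot hui_le hui_ge x hcase
    · rw [if_neg hcase]
      push_neg at hcase
      exact card_NW_dot_zero x (fun j hj => hcase j hj)
  rw [hsum, hScard, Nat.mul_comm]


lemma monole (humono : ∀ i ∈ Finset.Icc 1 (s + 1), u (i - 1) < u i) :
    ∀ i j, i ≤ j → j ≤ s + 1 → u i ≤ u j := by
  intro i j hij hj
  rcases Nat.lt_or_ge i j with h | h
  · exact le_of_lt (umono humono i j h hj)
  · have : i = j := by omega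
    rw [this]

lemma k_ge_three (hs : 2 ≤ s) (hu1 : u 1 = 1) (huk : u (s + 1) = k)
    (humono : ∀ i ∈ Finset.Icc 1 (s + 1), u (i - 1) < u i) : 3 ≤ k := by
  have h1 : u 1 < u s := umono humono 1 s (by omega) (by omega)
  have h2 : u s < u (s + 1) := umono humono s (s + 1) (by omega) (le_refl _)
  omega

lemma sum_pow_lt (hs : 2 ≤ s) (hst : s ≤ t + 1)
    (hu1 : u 1 = 1) (huk : u (s + 1) = k)
    (humono : ∀ i ∈ Finset.Icc 1 (s + 1), u (i - 1) < u i) :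
    ∑ i ∈ Finset.Icc 2 s, Fintype.card F ^ (u i - 1) < t * Fintype.card F ^ (k - 1) := by
  have hq : 1 < Fintype.card F := one_lt_cardF (F := F)
  have hk3 : 3 ≤ k := k_ge_three hs hu1 huk humono
  have hterm : ∀ i ∈ Finset.Icc 2 s, Fintype.card F ^ (u i - 1) ≤ Fintype.card F ^ (k - 2) := by
    intro i hi
    rw [Finset.mem_Icc] at hi
    have : u i < u (s + 1) := umono humono i (s + 1) (by omega) (le_refl _)
    exact Nat.pow_le_pow_right (by omega) (by omega)
  calc ∑ i ∈ Finset.Icc 2 s, Fintype.card F ^ (u i - 1)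
      ≤ ∑ _i ∈ Finset.Icc 2 s, Fintype.card F ^ (k - 2) := Finset.sum_le_sum hterm
  _ = (Finset.Icc 2 s).card * Fintype.card F ^ (k - 2) := by
      rw [Finset.sum_const, smul_eq_mul]
  _ ≤ t * Fintype.card F ^ (k - 2) := Nat.mul_le_mul_right _ (by rw [Nat.card_Icc]; omega)
  _ < t * Fintype.card F ^ (k - 1) := by
      have hpow : Fintype.card F ^ (k - 2) < Fintype.card F ^ (k - 1) :=
        Nat.pow_lt_pow_right hq (by omega)
      have ht : 0 < t := by omega
      exact (Nat.mul_lt_mul_left ht).mpr hpow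

open Classical in
lemma WT_class (hs : 2 ≤ s) (hst : s ≤ t + 1)
    (hu1 : u 1 = 1) (huk : u (s + 1) = k)
    (humono : ∀ i ∈ Finset.Icc 1 (s + 1), u (i - 1) < u i)
    (hk : 0 < k) (l : ℕ) (hl1 : 1 ≤ l) (hls : l ≤ s) (x : Fin k → F)
    (hx1 : ∀ j : Fin k, (j : ℕ) < u l → x j = 0)
    (hx2 : ∃ j : Fin k, (j : ℕ) < u (l + 1) ∧ x j ≠ 0) :
    WT k s t u x
      = (t * Fintype.card F ^ (k - 1) - ∑ i ∈ Finset.Icc 2 s, Fintype.card F ^ (u i - 1))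
        + ∑ i ∈ Finset.Icc 2 l, Fintype.card F ^ (u i - 1) := by
  have hul1 : 1 ≤ u l := by
    have := monole humono 1 l hl1 (by omega)
    omega
  have hx : x ≠ 0 := by
    obtain ⟨j, _, hj⟩ := hx2
    intro h0
    rw [h0] at hj
    exact hj rfl
  rw [WT_eq hs hst hu1 huk humono hk x hx]
  have hx0 : x ⟨0, hk⟩ = 0 := hx1 _ (by show (0 : ℕ) < u l; omega)
  rw [if_neg (by simpa using hx0)]
  have hite : ∀ i ∈ Finset.Icc 2 s,
      (if ∃ j : Fin k, (j : ℕ) < u i ∧ x j ≠ 0 then Fintype.card F ^ (u i - 1) else 0)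
        = (if l < i then Fintype.card F ^ (u i - 1) else 0) := by
    intro i hi
    rw [Finset.mem_Icc] at hi
    by_cases hcase : l < i
    · rw [if_pos hcase, if_pos]
      obtain ⟨j, hj1, hj2⟩ := hx2
      have : u (l + 1) ≤ u i := monole humono (l + 1) i (by omega) (by omega)
      exact ⟨j, by omega, hj2⟩
    · rw [if_neg hcase, if_neg]
      rintro ⟨j, hj1, hj2⟩
      have : u i ≤ u l := monole humono i l (by omega) (by omega)
      exact hj2 (hx1 j (by omega))
  rw [Finset.sum_congr rfl hite, Finset.sum_ite, Finset.sum_const_zero, add_zero]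
  have hfil : (Finset.Icc 2 s).filter (fun i => l < i) = Finset.Ioc l s := by
    ext i
    simp only [Finset.mem_filter, Finset.mem_Icc, Finset.mem_Ioc]
    omega
  rw [hfil]
  have hsplitS : ∑ i ∈ Finset.Icc 2 s, Fintype.card F ^ (u i - 1)
      = ∑ i ∈ Finset.Icc 2 l, Fintype.card F ^ (u i - 1)
        + ∑ i ∈ Finset.Ioc l s, Fintype.card F ^ (u i - 1) := by
    rw [← Finset.sum_union (by
      rw [Finset.disjoint_left]
      intro a ha hb
      rw [Finset.mem_Icc] at ha
      rw [Finset.mem_Ioc] at hb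
      omega)]
    congr 1
    ext i
    simp only [Finset.mem_union, Finset.mem_Icc, Finset.mem_Ioc]
    omega
  have hle := le_of_lt (sum_pow_lt (F := F) hs hst hu1 huk humono)
  omega

open Classical in
lemma WT_ind (hs : 2 ≤ s) (hst : s ≤ t + 1)
    (hu1 : u 1 = 1) (huk : u (s + 1) = k)
    (humono : ∀ i ∈ Finset.Icc 1 (s + 1), u (i - 1) < u i)
    (hk : 0 < k) (x : Fin k → F) (hx0 : x ⟨0, hk⟩ ≠ 0) :
    WT k s t u x
      = (t * Fintype.card F ^ (k - 1) - ∑ i ∈ Finset.Icc 2 s, Fintype.card F ^ (u i - 1))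
        + 1 := by
  have hx : x ≠ 0 := fun h0 => hx0 (by rw [h0]; rfl)
  rw [WT_eq hs hst hu1 huk humono hk x hx]
  rw [if_pos hx0]
  congr 2
  apply Finset.sum_congr rfl
  intro i hi
  rw [Finset.mem_Icc] at hi
  rw [if_pos]
  refine ⟨⟨0, hk⟩, ?_, hx0⟩
  have h1 : u 1 ≤ u i := monole humono 1 i (by omega) (by omega)
  show (0 : ℕ) < u i
  omega

lemma partitionP (hu1 : u 1 = 1) (huk : u (s + 1) = k) (hs : 2 ≤ s)
    (hk : 0 < k) (x : Fin k → F) (hx : x ≠ 0) (hx0 : x ⟨0, hk⟩ = 0) :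
    ∃ l, 1 ≤ l ∧ l ≤ s ∧ (∀ j : Fin k, (j : ℕ) < u l → x j = 0)
      ∧ (∃ j : Fin k, (j : ℕ) < u (l + 1) ∧ x j ≠ 0) := by
  classical
  set P : ℕ → Prop := fun l => ∀ j : Fin k, (j : ℕ) < u l → x j = 0 with hP
  have hP1 : P 1 := by
    intro j hj
    rw [hu1] at hj
    have : j = ⟨0, hk⟩ := Fin.ext (show (j : ℕ) = 0 by omega)
    rw [this]
    exact hx0
  have hPs1 : ¬ P (s + 1) := by
    intro h
    apply hx
    funext j
    exact h j (by rw [huk]; exact j.2)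
  have hL1 : 1 ≤ Nat.findGreatest P s := Nat.le_findGreatest (by omega) hP1
  have hLs : Nat.findGreatest P s ≤ s := Nat.findGreatest_le s
  have hPL : P (Nat.findGreatest P s) := Nat.findGreatest_spec (m := 1) (n := s) (by omega) hP1
  have hnPL1 : ¬ P (Nat.findGreatest P s + 1) := by
    rcases Nat.lt_or_ge (Nat.findGreatest P s) s with h | h
    · exact Nat.findGreatest_is_greatest (n := s) (by omega) (by omega)
    · have heq : Nat.findGreatest P s = s := by omega
      rw [heq]
      exact hPs1
  refine ⟨Nat.findGreatest P s, hL1, hLs, hPL, ?_⟩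
  simp only [hP] at hnPL1
  push_neg at hnPL1
  obtain ⟨j, hj1, hj2⟩ := hnPL1
  exact ⟨j, hj1, hj2⟩

lemma card_window_hi {a : ℕ} (ha : a ≤ k) :
    Nat.card {x : Fin k → F // ∀ j : Fin k, (j : ℕ) < a → x j = 0}
      = Fintype.card F ^ (k - a) := by
  classical
  have e1 : {x : Fin k → F // ∀ j : Fin k, (j : ℕ) < a → x j = 0}
      ≃ {x : Fin k → F // ∀ j : Fin k, ¬ (a ≤ (j : ℕ)) → x j = 0} :=
    Equiv.subtypeEquivRight (fun x => by
      constructor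
      · intro h j hj
        exact h j (by omega)
      · intro h j hj
        exact h j (by omega))
  rw [Nat.card_congr e1, Nat.card_congr (windowEquiv (fun j : Fin k => a ≤ (j : ℕ))),
    Nat.card_eq_fintype_card, Fintype.card_fun]
  have hc : Fintype.card {j : Fin k // a ≤ (j : ℕ)} = k - a := by
    rw [← Nat.card_eq_fintype_card]
    have e2 : {j : Fin k // a ≤ (j : ℕ)} ≃ {j : Fin k // ¬ ((j : ℕ) < a)} :=
      Equiv.subtypeEquivRight (fun j => by omega)
    rw [Nat.card_congr e2]
    exact card_subtype_not_lt ha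
  rw [hc]

lemma card_class {l : ℕ} (hul : u l ≤ u (l + 1)) (hul1 : u (l + 1) ≤ k) :
    Nat.card {x : Fin k → F // (∀ j : Fin k, (j : ℕ) < u l → x j = 0)
        ∧ (∃ j : Fin k, (j : ℕ) < u (l + 1) ∧ x j ≠ 0)}
      = Fintype.card F ^ (k - u l) - Fintype.card F ^ (k - u (l + 1)) := by
  classical
  set A : (Fin k → F) → Prop := fun x => ∀ j : Fin k, (j : ℕ) < u l → x j = 0 with hA
  set B : (Fin k → F) → Prop := fun x => ∀ j : Fin k, (j : ℕ) < u (l + 1) → x j = 0 with hB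
  have e1 : {x : Fin k → F // A x ∧ (∃ j : Fin k, (j : ℕ) < u (l + 1) ∧ x j ≠ 0)}
      ≃ {x : Fin k → F // A x ∧ ¬ B x} := by
    apply Equiv.subtypeEquivRight
    intro x
    constructor
    · rintro ⟨h1, j, hj1, hj2⟩
      exact ⟨h1, fun hall => hj2 (hall j hj1)⟩
    · rintro ⟨h1, h2⟩
      refine ⟨h1, ?_⟩
      by_contra hne
      push_neg at hne
      exact h2 (fun j hj => hne j hj)
  rw [Nat.card_congr e1]
  have hBA : ∀ x, B x → A x := by
    intro x hb j hj
    exact hb j (by omega)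
  have key := Finset.card_filter_add_card_filter_not
    (s := Finset.univ.filter A) (p := B)
  have hfB : (Finset.univ.filter A).filter B = Finset.univ.filter B := by
    ext z
    simp only [Finset.mem_filter, Finset.mem_univ, true_and]
    exact ⟨fun h => h.2, fun h => ⟨hBA z h, h⟩⟩
  rw [hfB] at key
  have hcA : (Finset.univ.filter A).card = Fintype.card F ^ (k - u l) := by
    rw [← Fintype.card_subtype, ← Nat.card_eq_fintype_card]
    exact card_window_hi (by omega)
  have hcB : (Finset.univ.filter B).card = Fintype.card F ^ (k - u (l + 1)) := by
    rw [← Fintype.card_subtype, ← Nat.card_eq_fintype_card]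
    exact card_window_hi hul1
  have hgoal : Nat.card {x : Fin k → F // A x ∧ ¬ B x}
      = ((Finset.univ.filter A).filter (fun x => ¬ B x)).card := by
    rw [Nat.card_eq_fintype_card, Fintype.card_subtype, Finset.filter_filter]
  rw [hgoal]
  omega

lemma card_ind (hk : 0 < k) :
    Nat.card {x : Fin k → F // x ⟨0, hk⟩ ≠ 0}
      = Fintype.card F ^ k - Fintype.card F ^ (k - 1) := by
  classical
  have h1 : Nat.card {x : Fin k → F // x ⟨0, hk⟩ = 0} = Fintype.card F ^ (k - 1) := by
    have e1 : {x : Fin k → F // x ⟨0, hk⟩ = 0}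
        ≃ {x : Fin k → F // ∀ j : Fin k, (j : ℕ) < 1 → x j = 0} :=
      Equiv.subtypeEquivRight (fun x => by
        constructor
        · intro h j hj
          have : j = ⟨0, hk⟩ := Fin.ext (show (j : ℕ) = 0 by omega)
          rw [this]
          exact h
        · intro h
          exact h ⟨0, hk⟩ (by simp))
    rw [Nat.card_congr e1]
    exact card_window_hi (by omega)
  have h2 := Fintype.card_subtype_compl (fun x : Fin k → F => x ⟨0, hk⟩ = 0)
  rw [Nat.card_eq_fintype_card]
  have h3 : Fintype.card {x : Fin k → F // x ⟨0, hk⟩ = 0} = Fintype.card F ^ (k - 1) := by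
    rw [← Nat.card_eq_fintype_card]
    exact h1
  have h4 : Fintype.card (Fin k → F) = Fintype.card F ^ k := by
    rw [Fintype.card_fun, Fintype.card_fin]
  have e2 : {x : Fin k → F // x ⟨0, hk⟩ ≠ 0} ≃ {x : Fin k → F // ¬ x ⟨0, hk⟩ = 0} :=
    Equiv.subtypeEquivRight (fun x => Iff.rfl)
  rw [Fintype.card_congr e2, h2, h3, h4]


open Classical in
lemma card_colIdx (hs : 2 ≤ s) (hst : s ≤ t + 1)
    (hu1 : u 1 = 1) (huk : u (s + 1) = k)
    (humono : ∀ i ∈ Finset.Icc 1 (s + 1), u (i - 1) < u i) :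
    Nat.card (colIdx F k s t u)
      = t * ((Fintype.card F ^ k - 1) / (Fintype.card F - 1))
        - (∑ i ∈ Finset.Icc 2 s, (Fintype.card F ^ u i - 1) / (Fintype.card F - 1)) + 1 := by
  classical
  have hmono := umono (u := u) humono
  have hk3 : 3 ≤ k := k_ge_three hs hu1 huk humono
  have huik : ∀ i, i ≤ s + 1 → u i ≤ k := by
    intro i hi
    rcases Nat.lt_or_ge i (s + 1) with h | h
    · exact le_of_lt (huk ▸ hmono i (s + 1) h (le_refl _))
    · have : i = s + 1 := by omega
      rw [this, huk]
  have hui1 : ∀ i, 1 ≤ i → i ≤ s + 1 → 1 ≤ u i := by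
    intro i h1 h2
    rcases Nat.lt_or_ge 1 i with h | h
    · have := hmono 1 i h h2
      omega
    · have : i = 1 := by omega
      rw [this, hu1]
  have hsplit : Nat.card (colIdx F k s t u)
      = Nat.card (Σ v : {v : Fin k → F // NW k v}, Fin (t - cnt k s u v.1)) + Nat.card Unit := by
    show Nat.card ((Σ v : {v : Fin k → F // NW k v}, Fin (t - cnt k s u v.1)) ⊕ Unit) = _
    exact Nat.card_sum
  rw [hsplit, show Nat.card Unit = 1 from Nat.card_unique]
  congr 1
  rw [Nat.card_eq_fintype_card, Fintype.card_sigma]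
  simp only [Fintype.card_fin]
  have hcnt_le : ∀ a : {v : Fin k → F // NW k v}, cnt k s u a.1 ≤ t := by
    intro a
    unfold cnt
    calc ((Finset.Icc 2 s).filter _).card ≤ (Finset.Icc 2 s).card := Finset.card_filter_le _ _
    _ ≤ t := by rw [Nat.card_Icc]; omega
  have hsum_univ : ∑ a : {v : Fin k → F // NW k v}, (t - cnt k s u a.1)
      = ∑ a ∈ (Finset.univ : Finset {v : Fin k → F // NW k v}), (t - cnt k s u a.1) := rfl
  rw [hsum_univ, Finset.sum_tsub_distrib _ (fun a _ => hcnt_le a), Finset.sum_const, smul_eq_mul]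
  have hcardA : (Finset.univ : Finset {v : Fin k → F // NW k v}).card
      = (Fintype.card F ^ k - 1) / (Fintype.card F - 1) := by
    rw [Finset.card_univ, ← Nat.card_eq_fintype_card]
    exact card_NW_eq_div (le_refl k) (by omega)
  have hsumcnt : ∑ a ∈ (Finset.univ : Finset {v : Fin k → F // NW k v}), cnt k s u a.1
      = ∑ i ∈ Finset.Icc 2 s, (Fintype.card F ^ u i - 1) / (Fintype.card F - 1) := by
    have hcnt_expand : ∀ a : {v : Fin k → F // NW k v}, cnt k s u a.1
        = ∑ i ∈ Finset.Icc 2 s,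
            (if (∀ j : Fin k, ¬ ((j : ℕ) < u i) → a.1 j = 0) then 1 else 0) := by
      intro a
      unfold cnt
      rw [Finset.card_filter]
    rw [Finset.sum_congr rfl (fun a _ => hcnt_expand a), Finset.sum_comm]
    apply Finset.sum_congr rfl
    intro i hi
    rw [Finset.mem_Icc] at hi
    rw [← Finset.card_filter]
    have hc2 : ((Finset.univ : Finset {v : Fin k → F // NW k v}).filter
        (fun a => ∀ j : Fin k, ¬ ((j : ℕ) < u i) → a.1 j = 0)).card
        = Nat.card {a : {v : Fin k → F // NW k v} //
            ∀ j : Fin k, ¬ ((j : ℕ) < u i) → a.1 j = 0} := by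
      rw [Nat.card_eq_fintype_card, Fintype.card_subtype]
    rw [hc2]
    have he : {a : {v : Fin k → F // NW k v} // ∀ j : Fin k, ¬ ((j : ℕ) < u i) → a.1 j = 0}
        ≃ {v : Fin k → F // NW (u i) v} := by
      refine (Equiv.subtypeSubtypeEquivSubtypeInter (fun v : Fin k → F => NW k v)
        (fun v => ∀ j : Fin k, ¬ ((j : ℕ) < u i) → v j = 0)).trans
        (Equiv.subtypeEquivRight ?_)
      intro v
      unfold NW
      constructor
      · rintro ⟨⟨_, hnml⟩, hwin⟩
        exact ⟨hwin, hnml⟩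
      · rintro ⟨hwin, hnml⟩
        exact ⟨⟨fun j hj => absurd j.2 hj, hnml⟩, hwin⟩
    rw [Nat.card_congr he]
    exact card_NW_eq_div (huik i (by omega)) (hui1 i (by omega) (by omega))
  rw [hcardA, hsumcnt, Nat.mul_comm]

end Hyp

end Construction

end Stmt6Aux

open Stmt6Aux in
/-- Theorem `xxd` (a): existence of the modified code with the stated
weight distribution. -/
theorem stmt_6 (q : ℕ) (F : Type) [Field F] [Fintype F] (hq : Fintype.card F = q)
    (k s t : ℕ) (hs : 2 ≤ s) (hst : s ≤ t + 1) (u : ℕ → ℕ)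
    (hu0 : u 0 = 0) (hu1 : u 1 = 1) (huk : u (s + 1) = k)
    (humono : ∀ i ∈ Finset.Icc 1 (s + 1), u (i - 1) < u i) :
    ∃ C : Submodule F
        (Fin (t * ((q ^ k - 1) / (q - 1)) - (∑ i ∈ Finset.Icc 2 s, (q ^ u i - 1) / (q - 1)) + 1)
          → F),
      Module.finrank F ↥C = k ∧
      minDist C = t * q ^ (k - 1) - ∑ i ∈ Finset.Icc 2 s, q ^ (u i - 1) ∧
      wdist C 0 = 1 ∧
      wdist C (t * q ^ (k - 1) - ∑ i ∈ Finset.Icc 2 s, q ^ (u i - 1)) =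
        q ^ (k - 1) - q ^ (k - u 2) ∧
      wdist C ((t * q ^ (k - 1) - ∑ i ∈ Finset.Icc 2 s, q ^ (u i - 1)) + 1) =
        q ^ k - q ^ (k - 1) ∧
      (∀ l, 2 ≤ l → l ≤ s →
        wdist C ((t * q ^ (k - 1) - ∑ i ∈ Finset.Icc 2 s, q ^ (u i - 1)) +
            ∑ i ∈ Finset.Icc 2 l, q ^ (u i - 1)) =
          q ^ (k - u l) - q ^ (k - u (l + 1))) ∧
      (∀ j, 1 ≤ j →
        j ≠ t * q ^ (k - 1) - ∑ i ∈ Finset.Icc 2 s, q ^ (u i - 1) →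
        j ≠ (t * q ^ (k - 1) - ∑ i ∈ Finset.Icc 2 s, q ^ (u i - 1)) + 1 →
        (∀ l, 2 ≤ l → l ≤ s →
          j ≠ (t * q ^ (k - 1) - ∑ i ∈ Finset.Icc 2 s, q ^ (u i - 1)) +
              ∑ i ∈ Finset.Icc 2 l, q ^ (u i - 1)) →
        wdist C j = 0) := by
  classical
  subst hq
  -- basic facts
  have hq2 : 1 < Fintype.card F := one_lt_cardF (F := F)
  have hk3 : 3 ≤ k := k_ge_three hs hu1 huk humono
  have hk : 0 < k := by omega
  have hmono := umono (u := u) humono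
  have huik : ∀ i, i ≤ s + 1 → u i ≤ k := by
    intro i hi
    rcases Nat.lt_or_ge i (s + 1) with h | h
    · exact le_of_lt (huk ▸ hmono i (s + 1) h (le_refl _))
    · have : i = s + 1 := by omega
      rw [this, huk]
  have hu2 : 2 ≤ u 2 := by
    have := hmono 1 2 (by omega) (by omega)
    omega
  have hlt : ∑ i ∈ Finset.Icc 2 s, Fintype.card F ^ (u i - 1)
      < t * Fintype.card F ^ (k - 1) := sum_pow_lt hs hst hu1 huk humono
  have hIcc21 : (Finset.Icc 2 1 : Finset ℕ) = ∅ := Finset.Icc_eq_empty (by omega)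
  -- sums facts
  have hS2 : ∀ l, 2 ≤ l → l ≤ s →
      2 ≤ ∑ i ∈ Finset.Icc 2 l, Fintype.card F ^ (u i - 1) := by
    intro l hl2 hls
    have hmem : (2 : ℕ) ∈ Finset.Icc 2 l := Finset.mem_Icc.mpr ⟨le_refl _, hl2⟩
    have h1 : Fintype.card F ^ (u 2 - 1) ≤ ∑ i ∈ Finset.Icc 2 l, Fintype.card F ^ (u i - 1) :=
      Finset.single_le_sum (f := fun i => Fintype.card F ^ (u i - 1))
        (fun i _ => Nat.zero_le _) hmem
    have h2 : Fintype.card F ≤ Fintype.card F ^ (u 2 - 1) := by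
      calc Fintype.card F = Fintype.card F ^ 1 := (pow_one _).symm
      _ ≤ Fintype.card F ^ (u 2 - 1) := Nat.pow_le_pow_right (by omega) (by omega)
    omega
  have hSstrict : ∀ l l', 1 ≤ l → l < l' → l' ≤ s →
      (∑ i ∈ Finset.Icc 2 l, Fintype.card F ^ (u i - 1))
        < ∑ i ∈ Finset.Icc 2 l', Fintype.card F ^ (u i - 1) := by
    intro l l' h1 h2 h3
    have hdisj : Disjoint (Finset.Icc 2 l) (Finset.Ioc l l') := by
      rw [Finset.disjoint_left]
      intro a ha hb
      rw [Finset.mem_Icc] at ha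
      rw [Finset.mem_Ioc] at hb
      omega
    have hunion : Finset.Icc 2 l ∪ Finset.Ioc l l' = Finset.Icc 2 l' := by
      ext i
      simp only [Finset.mem_union, Finset.mem_Icc, Finset.mem_Ioc]
      omega
    rw [← hunion, Finset.sum_union hdisj]
    have hpos : 0 < ∑ i ∈ Finset.Ioc l l', Fintype.card F ^ (u i - 1) := by
      apply Finset.sum_pos
      · intro i _
        exact Nat.pow_pos (by omega)
      · exact ⟨l', Finset.mem_Ioc.mpr ⟨h2, le_refl _⟩⟩
    omega
  -- the code
  have hcardIdx := card_colIdx (F := F) (k := k) (s := s) (t := t) (u := u)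
    hs hst hu1 huk humono
  have hcardIdx' : Fintype.card (colIdx F k s t u)
      = t * ((Fintype.card F ^ k - 1) / (Fintype.card F - 1))
        - (∑ i ∈ Finset.Icc 2 s, (Fintype.card F ^ u i - 1) / (Fintype.card F - 1)) + 1 := by
    rw [← Nat.card_eq_fintype_card, hcardIdx]
  set e := (Fintype.equivFinOfCardEq hcardIdx').symm with hedef
  set Enc := (LinearMap.funLeft F F ⇑e).comp (EncL F k s t u) with hEncDef
  have hwtEq : ∀ x : Fin k → F, hwt (Enc x) = WT k s t u x := by
    intro x
    unfold hwt WT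
    exact Nat.card_congr (Equiv.subtypeEquiv e (fun i => Iff.rfl))
  -- weight case analysis
  have hcases : ∀ x : Fin k → F, x ≠ 0 →
      (WT k s t u x
          = (t * Fintype.card F ^ (k - 1) - ∑ i ∈ Finset.Icc 2 s, Fintype.card F ^ (u i - 1)) + 1
        ∧ x ⟨0, hk⟩ ≠ 0)
      ∨ (∃ l, 1 ≤ l ∧ l ≤ s
          ∧ WT k s t u x
              = (t * Fintype.card F ^ (k - 1) - ∑ i ∈ Finset.Icc 2 s, Fintype.card F ^ (u i - 1))
                + ∑ i ∈ Finset.Icc 2 l, Fintype.card F ^ (u i - 1)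
          ∧ (∀ j : Fin k, (j : ℕ) < u l → x j = 0)
          ∧ (∃ j : Fin k, (j : ℕ) < u (l + 1) ∧ x j ≠ 0)) := by
    intro x hx
    by_cases hx0 : x ⟨0, hk⟩ ≠ 0
    · exact Or.inl ⟨WT_ind hs hst hu1 huk humono hk x hx0, hx0⟩
    · push_neg at hx0
      obtain ⟨l, hl1, hls, hcl1, hcl2⟩ := partitionP hu1 huk hs hk x hx hx0
      exact Or.inr ⟨l, hl1, hls, WT_class hs hst hu1 huk humono hk l hl1 hls x hcl1 hcl2,
        hcl1, hcl2⟩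
  have hWT_ge : ∀ x : Fin k → F, x ≠ 0 →
      t * Fintype.card F ^ (k - 1) - ∑ i ∈ Finset.Icc 2 s, Fintype.card F ^ (u i - 1)
        ≤ WT k s t u x := by
    intro x hx
    rcases hcases x hx with ⟨h, _⟩ | ⟨l, _, _, h, _⟩ <;> omega
  have hWTpos : ∀ x : Fin k → F, x ≠ 0 → 0 < WT k s t u x := by
    intro x hx
    have := hWT_ge x hx
    omega
  have hwt0 : ∀ N : ℕ, hwt (0 : Fin N → F) = 0 := by
    intro N
    unfold hwt
    have : IsEmpty {i : Fin N // (0 : Fin N → F) i ≠ 0} := ⟨fun p => p.2 rfl⟩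
    simp
  have hinj : Function.Injective ⇑Enc := by
    rw [← LinearMap.ker_eq_bot]
    apply LinearMap.ker_eq_bot'.mpr
    intro m hm
    by_contra hne
    have h1 := hWTpos m hne
    have h2 : hwt (Enc m) = 0 := by rw [hm]; exact hwt0 _
    rw [hwtEq] at h2
    omega
  refine ⟨LinearMap.range Enc, ?_, ?_, ?_, ?_, ?_, ?_, ?_⟩
  -- (1) finrank
  · rw [LinearMap.finrank_range_of_inj hinj]
    rw [Module.finrank_fin_fun]
  -- (2) minDist
  · set x1 : Fin k → F := Pi.single (⟨1, by omega⟩ : Fin k) (1 : F) with hx1def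
    have hx1ne : x1 ≠ 0 := by
      intro h
      have := congrFun h ⟨1, by omega⟩
      rw [hx1def, Pi.single_eq_same] at this
      exact one_ne_zero this
    have hcl1 : ∀ j : Fin k, (j : ℕ) < u 1 → x1 j = 0 := by
      intro j hj
      rw [hu1] at hj
      rw [hx1def]
      apply Pi.single_eq_of_ne
      intro hh
      rw [hh] at hj
      simp at hj
    have hcl2 : ∃ j : Fin k, (j : ℕ) < u 2 ∧ x1 j ≠ 0 := by
      refine ⟨⟨1, by omega⟩, ?_, by rw [hx1def, Pi.single_eq_same]; exact one_ne_zero⟩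
      show (1 : ℕ) < u 2
      omega
    have hWTx1 : WT k s t u x1
        = t * Fintype.card F ^ (k - 1) - ∑ i ∈ Finset.Icc 2 s, Fintype.card F ^ (u i - 1) := by
      rw [WT_class hs hst hu1 huk humono hk 1 (le_refl _) (by omega) _ hcl1 (by
        rw [show u (1 + 1) = u 2 from rfl]; exact hcl2)]
      rw [hIcc21, Finset.sum_empty, add_zero]
    apply le_antisymm
    · apply Nat.sInf_le
      refine ⟨Enc x1, ⟨_, rfl⟩, ?_, ?_⟩
      · intro h
        apply hx1ne
        apply hinj
        rw [h, map_zero]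
      · rw [hwtEq]
        exact hWTx1
    · apply le_csInf
      · refine ⟨hwt (Enc x1), Enc x1, ⟨x1, rfl⟩, ?_, rfl⟩
        intro h
        apply hx1ne
        apply hinj
        rw [h, map_zero]
      · rintro w ⟨c, hcC, hcne, hcw⟩
        obtain ⟨x, hx⟩ := LinearMap.mem_range.mp hcC
        have hxne : x ≠ 0 := by
          intro h0
          apply hcne
          rw [← hx, h0, map_zero]
        rw [← hcw, ← hx, hwtEq]
        exact hWT_ge x hxne
  -- wdist identity
  all_goals (
    have hwdist : ∀ jj : ℕ, wdist (LinearMap.range Enc) jj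
        = Nat.card {x : Fin k → F // WT k s t u x = jj} := by
      intro jj
      unfold wdist
      refine (Nat.card_congr (Equiv.ofBijective
        (fun x : {x : Fin k → F // WT k s t u x = jj} =>
          (⟨Enc x.1, ⟨x.1, rfl⟩, by rw [hwtEq]; exact x.2⟩ :
            {c // c ∈ LinearMap.range Enc ∧ hwt c = jj}))
        ⟨?_, ?_⟩)).symm
      · intro a b hab
        apply Subtype.ext
        exact hinj (congrArg Subtype.val hab)
      · rintro ⟨c, hcC, hhw⟩
        obtain ⟨x, hx⟩ := LinearMap.mem_range.mp hcC
        refine ⟨⟨x, ?_⟩, Subtype.ext hx⟩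
        rw [← hwtEq, hx]
        exact hhw)
  -- (3) wdist 0 = 1
  · rw [hwdist 0]
    rw [Nat.card_eq_one_iff_unique]
    constructor
    · constructor
      intro a b
      apply Subtype.ext
      have ha : a.1 = 0 := by
        by_contra hne
        have := hWTpos a.1 hne
        have := a.2
        omega
      have hb : b.1 = 0 := by
        by_contra hne
        have := hWTpos b.1 hne
        have := b.2
        omega
      rw [ha, hb]
    · exact ⟨⟨0, WT_zero k s t u⟩⟩
  -- (4) wdist d
  · rw [hwdist]
    have hiff : ∀ x : Fin k → F,
        WT k s t u x
            = t * Fintype.card F ^ (k - 1) - ∑ i ∈ Finset.Icc 2 s, Fintype.card F ^ (u i - 1)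
          ↔ ((∀ j : Fin k, (j : ℕ) < u 1 → x j = 0)
              ∧ (∃ j : Fin k, (j : ℕ) < u (1 + 1) ∧ x j ≠ 0)) := by
      intro x
      constructor
      · intro h
        have hxne : x ≠ 0 := by
          intro h0
          rw [h0, WT_zero] at h
          omega
        rcases hcases x hxne with ⟨hv, _⟩ | ⟨l, hl1, hls, hv, hc1, hc2⟩
        · omega
        · rcases Nat.lt_or_ge l 2 with h2 | h2
          · have : l = 1 := by omega
            subst this
            exact ⟨hc1, hc2⟩
          · have := hS2 l h2 hls
            omega
      · rintro ⟨hc1, hc2⟩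
        rw [WT_class hs hst hu1 huk humono hk 1 (le_refl _) (by omega) x hc1 hc2]
        rw [hIcc21, Finset.sum_empty, add_zero]
    rw [Nat.card_congr (Equiv.subtypeEquivRight hiff)]
    rw [card_class (monole humono 1 2 (by omega) (by omega)) (huik 2 (by omega))]
    rw [hu1]
  -- (5) wdist (d+1)
  · rw [hwdist]
    have hiff : ∀ x : Fin k → F,
        WT k s t u x
            = (t * Fintype.card F ^ (k - 1) - ∑ i ∈ Finset.Icc 2 s, Fintype.card F ^ (u i - 1)) + 1
          ↔ x ⟨0, hk⟩ ≠ 0 := by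
      intro x
      constructor
      · intro h
        have hxne : x ≠ 0 := by
          intro h0
          rw [h0, WT_zero] at h
          omega
        rcases hcases x hxne with ⟨hv, hx0⟩ | ⟨l, hl1, hls, hv, hc1, hc2⟩
        · exact hx0
        · rcases Nat.lt_or_ge l 2 with h2 | h2
          · have : l = 1 := by omega
            subst this
            rw [hIcc21, Finset.sum_empty, add_zero] at hv
            omega
          · have := hS2 l h2 hls
            omega
      · intro hx0
        exact WT_ind hs hst hu1 huk humono hk x hx0
    rw [Nat.card_congr (Equiv.subtypeEquivRight hiff)]
    exact card_ind hk
  -- (6) wdist for classes l ∈ [2,s]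
  · intro l0 hl02 hl0s
    rw [hwdist]
    have hiff : ∀ x : Fin k → F,
        WT k s t u x
            = (t * Fintype.card F ^ (k - 1) - ∑ i ∈ Finset.Icc 2 s, Fintype.card F ^ (u i - 1))
              + ∑ i ∈ Finset.Icc 2 l0, Fintype.card F ^ (u i - 1)
          ↔ ((∀ j : Fin k, (j : ℕ) < u l0 → x j = 0)
              ∧ (∃ j : Fin k, (j : ℕ) < u (l0 + 1) ∧ x j ≠ 0)) := by
      intro x
      have hS0 := hS2 l0 hl02 hl0s
      constructor
      · intro h
        have hxne : x ≠ 0 := by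
          intro h0
          rw [h0, WT_zero] at h
          omega
        rcases hcases x hxne with ⟨hv, hx0⟩ | ⟨l, hl1, hls, hv, hc1, hc2⟩
        · omega
        · have hll0 : l = l0 := by
            by_contra hne
            rcases Nat.lt_or_ge l l0 with hlt2 | hgt
            · have := hSstrict l l0 hl1 hlt2 hl0s
              omega
            · have hgt2 : l0 < l := by omega
              have := hSstrict l0 l (by omega) hgt2 hls
              omega
          subst hll0
          exact ⟨hc1, hc2⟩
      · rintro ⟨hc1, hc2⟩
        exact WT_class hs hst hu1 huk humono hk l0 (by omega) hl0s x hc1 hc2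
    rw [Nat.card_congr (Equiv.subtypeEquivRight hiff)]
    exact card_class (monole humono l0 (l0 + 1) (by omega) (by omega)) (huik (l0 + 1) (by omega))
  -- (7) all other weights
  · intro j hj1 hjd hjd1 hjl
    rw [hwdist]
    have : IsEmpty {x : Fin k → F // WT k s t u x = j} := by
      refine ⟨fun p => ?_⟩
      obtain ⟨x, hx⟩ := p
      by_cases hxne : x = 0
      · rw [hxne, WT_zero] at hx
        omega
      rcases hcases x hxne with ⟨hv, _⟩ | ⟨l, hl1, hls, hv, _, _⟩
      · omega
      · rcases Nat.lt_or_ge l 2 with h2 | h2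
        · have : l = 1 := by omega
          subst this
          rw [hIcc21, Finset.sum_empty, add_zero] at hv
          omega
        · exact (hjl l h2 hls) (by omega)
    simp
end

section
/- Let q be a prime power and let integers satisfy 1 < u_2 < u_3 < k. Let U_2, U_3 be subspaces of F_q^k with dim U_2 = u_2, dim U_3 = u_3 and dim(U_2 ∩ U_3) = 1, and set U_1 = U_2 ∩ U_3. Let W_2, W_3 be subspaces of F_q^{k-1} with dim W_2 = u_2 - 1, dim W_3 = u_3 - 1 and W_2 ∩ W_3 = {0}. Then for any integers r, v_2, v_3, the number of r-dimensional subspaces V of F_q^k with dim(U_1 ∩ V) = 1, dim(U_2 ∩ V) = v_2 and dim(U_3 ∩ V) = v_3 equals the number of (r-1)-dimensional subspaces W of F_q^{k-1} with dim(W_2 ∩ W) = v_2 - 1 and dim(W_3 ∩ W) = v_3 - 1. -/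
open Finset

section AuxStmt11

open Submodule Module

private lemma aux_finrank_map_add {F M N : Type} [Field F] [AddCommGroup M] [Module F M]
    [AddCommGroup N] [Module F N] [FiniteDimensional F M]
    (f : M →ₗ[F] N) (A : Submodule F M) :
    Module.finrank F ↥(A.map f) + Module.finrank F ↥(A ⊓ LinearMap.ker f) =
      Module.finrank F ↥A := by
  have h := LinearMap.finrank_range_add_finrank_ker (f.domRestrict A)
  have hd : f.domRestrict A = f.comp A.subtype := rfl
  have h1 : LinearMap.range (f.domRestrict A) = A.map f := by
    rw [hd, LinearMap.range_comp, Submodule.range_subtype]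
  have h2 : Module.finrank F ↥(LinearMap.ker (f.domRestrict A)) =
      Module.finrank F ↥(A ⊓ LinearMap.ker f) := by
    have e : LinearMap.ker (f.domRestrict A) = Submodule.comap A.subtype (LinearMap.ker f) := by
      rw [hd, LinearMap.ker_comp]
    rw [e, ← Submodule.finrank_map_subtype_eq, Submodule.map_comap_subtype]
  rw [h1, h2] at h
  exact h

private def tripleAdd {F M : Type} [Field F] [AddCommGroup M] [Module F M]
    (A B C : Submodule F M) : (↥A × ↥B) × ↥C →ₗ[F] M where
  toFun x := (x.1.1 : M) + x.1.2 + x.2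
  map_add' x y := by simp; abel
  map_smul' c x := by simp [smul_add]

@[simp] private lemma tripleAdd_apply {F M : Type} [Field F] [AddCommGroup M] [Module F M]
    (A B C : Submodule F M) (x : (↥A × ↥B) × ↥C) :
    tripleAdd A B C x = (x.1.1 : M) + x.1.2 + x.2 := rfl

private lemma tripleAdd_bijective {F M : Type} [Field F] [AddCommGroup M] [Module F M]
    (A B C : Submodule F M) (hAB : A ⊓ B = ⊥) (hC : IsCompl (A ⊔ B) C) :
    Function.Bijective (tripleAdd A B C) := by
  constructor
  · rw [← LinearMap.ker_eq_bot, eq_bot_iff]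
    rintro ⟨⟨a, b⟩, c⟩ h
    simp only [LinearMap.mem_ker, tripleAdd_apply] at h
    have hab : (a : M) + b ∈ (A ⊔ B) ⊓ C := by
      constructor
      · exact add_mem (Submodule.mem_sup_left a.2) (Submodule.mem_sup_right b.2)
      · have : (a : M) + b = -c := eq_neg_of_add_eq_zero_left h
        rw [this]; exact neg_mem c.2
    rw [hC.disjoint.eq_bot, Submodule.mem_bot] at hab
    have hc : (c : M) = 0 := by rw [hab, zero_add] at h; exact h
    have ha : (a : M) ∈ A ⊓ B := by
      refine ⟨a.2, ?_⟩
      have : (a : M) = -b := eq_neg_of_add_eq_zero_left hab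
      rw [this]; exact neg_mem b.2
    rw [hAB, Submodule.mem_bot] at ha
    have hb : (b : M) = 0 := by rw [ha, zero_add] at hab; exact hab
    simp only [Submodule.mem_bot, Prod.ext_iff]
    exact ⟨⟨Subtype.ext ha, Subtype.ext hb⟩, Subtype.ext hc⟩
  · intro x
    have hx : x ∈ (A ⊔ B) ⊔ C := by rw [hC.codisjoint.eq_top]; trivial
    obtain ⟨y, hy, c, hc, rfl⟩ := Submodule.mem_sup.mp hx
    obtain ⟨a, ha, b, hb, rfl⟩ := Submodule.mem_sup.mp hy
    exact ⟨((⟨a, ha⟩, ⟨b, hb⟩), ⟨c, hc⟩), rfl⟩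

private lemma exists_equiv_pair {F M N : Type} [Field F] [AddCommGroup M] [Module F M]
    [AddCommGroup N] [Module F N] [FiniteDimensional F M] [FiniteDimensional F N]
    (hMN : Module.finrank F M = Module.finrank F N)
    (X2 X3 : Submodule F M) (Y2 Y3 : Submodule F N)
    (hX : X2 ⊓ X3 = ⊥) (hY : Y2 ⊓ Y3 = ⊥)
    (h2 : Module.finrank F ↥X2 = Module.finrank F ↥Y2)
    (h3 : Module.finrank F ↥X3 = Module.finrank F ↥Y3) :
    ∃ τ : M ≃ₗ[F] N, X2.map (τ : M →ₗ[F] N) = Y2 ∧ X3.map (τ : M →ₗ[F] N) = Y3 := by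
  obtain ⟨S, hS⟩ := Submodule.exists_isCompl (X2 ⊔ X3)
  obtain ⟨T, hT⟩ := Submodule.exists_isCompl (Y2 ⊔ Y3)
  have hbM := tripleAdd_bijective X2 X3 S hX hS
  have hbN := tripleAdd_bijective Y2 Y3 T hY hT
  have dS1 := Submodule.finrank_sup_add_finrank_inf_eq X2 X3
  have dS2 := Submodule.finrank_add_eq_of_isCompl hS
  have dT1 := Submodule.finrank_sup_add_finrank_inf_eq Y2 Y3
  have dT2 := Submodule.finrank_add_eq_of_isCompl hT
  rw [hX, finrank_bot] at dS1
  rw [hY, finrank_bot] at dT1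
  have hST : Module.finrank F ↥S = Module.finrank F ↥T := by omega
  let e2 : ↥X2 ≃ₗ[F] ↥Y2 := LinearEquiv.ofFinrankEq _ _ h2
  let e3 : ↥X3 ≃ₗ[F] ↥Y3 := LinearEquiv.ofFinrankEq _ _ h3
  let eS : ↥S ≃ₗ[F] ↥T := LinearEquiv.ofFinrankEq _ _ hST
  let eM := LinearEquiv.ofBijective _ hbM
  let eN := LinearEquiv.ofBijective _ hbN
  let τ : M ≃ₗ[F] N := eM.symm ≪≫ₗ ((e2.prodCongr e3).prodCongr eS) ≪≫ₗ eN
  have fwd2 : ∀ x : M, x ∈ X2 → τ x ∈ Y2 := by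
    intro x hx
    have hxM : eM.symm x = ((⟨x, hx⟩, 0), 0) := by
      rw [LinearEquiv.symm_apply_eq]
      simp [eM, LinearEquiv.ofBijective_apply]
    have : τ x = ((e2 ⟨x, hx⟩ : ↥Y2) : N) := by
      simp [τ, LinearEquiv.trans_apply, hxM, eN, LinearEquiv.ofBijective_apply]
    rw [this]; exact (e2 ⟨x, hx⟩).2
  have fwd3 : ∀ x : M, x ∈ X3 → τ x ∈ Y3 := by
    intro x hx
    have hxM : eM.symm x = ((0, ⟨x, hx⟩), 0) := by
      rw [LinearEquiv.symm_apply_eq]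
      simp [eM, LinearEquiv.ofBijective_apply]
    have : τ x = ((e3 ⟨x, hx⟩ : ↥Y3) : N) := by
      simp [τ, LinearEquiv.trans_apply, hxM, eN, LinearEquiv.ofBijective_apply]
    rw [this]; exact (e3 ⟨x, hx⟩).2
  have bwd2 : ∀ y : N, y ∈ Y2 → τ.symm y ∈ X2 := by
    intro y hy
    have hyN : eN.symm y = ((⟨y, hy⟩, 0), 0) := by
      rw [LinearEquiv.symm_apply_eq]
      simp [eN, LinearEquiv.ofBijective_apply]
    have : τ.symm y = ((e2.symm ⟨y, hy⟩ : ↥X2) : M) := by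
      simp [τ, LinearEquiv.trans_apply, LinearEquiv.symm_trans_apply, hyN,
        LinearEquiv.prodCongr_symm, eM, LinearEquiv.ofBijective_apply]
    rw [this]; exact (e2.symm ⟨y, hy⟩).2
  have bwd3 : ∀ y : N, y ∈ Y3 → τ.symm y ∈ X3 := by
    intro y hy
    have hyN : eN.symm y = ((0, ⟨y, hy⟩), 0) := by
      rw [LinearEquiv.symm_apply_eq]
      simp [eN, LinearEquiv.ofBijective_apply]
    have : τ.symm y = ((e3.symm ⟨y, hy⟩ : ↥X3) : M) := by
      simp [τ, LinearEquiv.trans_apply, LinearEquiv.symm_trans_apply, hyN,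
        LinearEquiv.prodCongr_symm, eM, LinearEquiv.ofBijective_apply]
    rw [this]; exact (e3.symm ⟨y, hy⟩).2
  refine ⟨τ, ?_, ?_⟩
  · apply le_antisymm
    · rintro _ ⟨x, hx, rfl⟩; exact fwd2 x hx
    · intro y hy; exact ⟨τ.symm y, bwd2 y hy, by simp⟩
  · apply le_antisymm
    · rintro _ ⟨x, hx, rfl⟩; exact fwd3 x hx
    · intro y hy; exact ⟨τ.symm y, bwd3 y hy, by simp⟩

private lemma exists_good_map {F : Type} [Field F] {k : ℕ}
    (u2 u3 : ℕ) (h12 : 1 ≤ u2) (h13 : 1 ≤ u3)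
    (U2 U3 : Submodule F (Fin k → F))
    (hU2 : Module.finrank F ↥U2 = u2) (hU3 : Module.finrank F ↥U3 = u3)
    (hU23 : Module.finrank F ↥(U2 ⊓ U3) = 1)
    (W2 W3 : Submodule F (Fin (k - 1) → F))
    (hW2 : Module.finrank F ↥W2 = u2 - 1) (hW3 : Module.finrank F ↥W3 = u3 - 1)
    (hW23 : W2 ⊓ W3 = ⊥) :
    ∃ f : (Fin k → F) →ₗ[F] (Fin (k - 1) → F), Function.Surjective f ∧
      LinearMap.ker f = U2 ⊓ U3 ∧ U2.map f = W2 ∧ U3.map f = W3 := by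
  set U1 := U2 ⊓ U3 with hU1
  have hQ : Module.finrank F ((Fin k → F) ⧸ U1) = k - 1 := by
    have h := U1.finrank_quotient_add_finrank
    rw [Module.finrank_fin_fun, hU23] at h
    omega
  set X2 := U2.map U1.mkQ with hX2def
  set X3 := U3.map U1.mkQ with hX3def
  have hX2 : Module.finrank F ↥X2 = u2 - 1 := by
    have h := aux_finrank_map_add U1.mkQ U2
    rw [Submodule.ker_mkQ] at h
    have h2 : U2 ⊓ U1 = U1 := inf_eq_right.mpr inf_le_left
    rw [h2, hU23, hU2] at h
    rw [hX2def]
    omega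
  have hX3 : Module.finrank F ↥X3 = u3 - 1 := by
    have h := aux_finrank_map_add U1.mkQ U3
    rw [Submodule.ker_mkQ] at h
    have h2 : U3 ⊓ U1 = U1 := inf_eq_right.mpr inf_le_right
    rw [h2, hU23, hU3] at h
    rw [hX3def]
    omega
  have hXdisj : X2 ⊓ X3 = ⊥ := by
    rw [eq_bot_iff]
    rintro z ⟨hz2, hz3⟩
    obtain ⟨x, hx, rfl⟩ := hz2
    obtain ⟨y, hy, hxy⟩ := hz3
    have hyx : y - x ∈ U1 := by
      rw [← Submodule.ker_mkQ U1, LinearMap.mem_ker, map_sub, hxy, sub_self]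
    have hxU3 : x ∈ U3 := by
      have : x = y - (y - x) := by ring
      rw [this]; exact sub_mem hy hyx.2
    have hxU1 : x ∈ U1 := ⟨hx, hxU3⟩
    rw [Submodule.mem_bot, ← LinearMap.mem_ker, Submodule.ker_mkQ]
    exact hxU1
  obtain ⟨τ, hτ2, hτ3⟩ := exists_equiv_pair (M := (Fin k → F) ⧸ U1) (N := Fin (k - 1) → F)
    (by rw [hQ, Module.finrank_fin_fun]) X2 X3 W2 W3 hXdisj hW23
    (by rw [hX2, hW2]) (by rw [hX3, hW3])
  refine ⟨(τ : ((Fin k → F) ⧸ U1) →ₗ[F] (Fin (k - 1) → F)).comp U1.mkQ, ?_, ?_, ?_, ?_⟩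
  · exact τ.surjective.comp U1.mkQ_surjective
  · rw [LinearMap.ker_comp, LinearEquiv.ker, Submodule.comap_bot, Submodule.ker_mkQ]
  · rw [Submodule.map_comp]; exact hτ2
  · rw [Submodule.map_comp]; exact hτ3

private lemma card_eq_of_good_map {F : Type} [Field F] [Fintype F] {k m : ℕ}
    (U2 U3 : Submodule F (Fin k → F)) (W2 W3 : Submodule F (Fin m → F))
    (f : (Fin k → F) →ₗ[F] (Fin m → F)) (hsurj : Function.Surjective f)
    (hker : LinearMap.ker f = U2 ⊓ U3) (hd1 : Module.finrank F ↥(U2 ⊓ U3) = 1)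
    (hm2 : U2.map f = W2) (hm3 : U3.map f = W3) (r v2 v3 : ℤ) :
    Nat.card {V : Submodule F (Fin k → F) //
        (Module.finrank F ↥V : ℤ) = r ∧
        Module.finrank F ↥(U2 ⊓ U3 ⊓ V) = 1 ∧
        (Module.finrank F ↥(U2 ⊓ V) : ℤ) = v2 ∧
        (Module.finrank F ↥(U3 ⊓ V) : ℤ) = v3} =
      Nat.card {W : Submodule F (Fin m → F) //
        (Module.finrank F ↥W : ℤ) = r - 1 ∧
        (Module.finrank F ↥(W2 ⊓ W) : ℤ) = v2 - 1 ∧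
        (Module.finrank F ↥(W3 ⊓ W) : ℤ) = v3 - 1} := by
  have key : ∀ A : Submodule F (Fin k → F), U2 ⊓ U3 ≤ A →
      Module.finrank F ↥(A.map f) + 1 = Module.finrank F ↥A := by
    intro A hA
    have h := aux_finrank_map_add f A
    rw [hker, inf_eq_right.mpr hA, hd1] at h
    exact h
  have mapinf : ∀ A B : Submodule F (Fin k → F), LinearMap.ker f ≤ B →
      A.map f ⊓ B.map f = (A ⊓ B).map f := by
    intro A B hB
    rw [Submodule.map_inf_eq_map_inf_comap, Submodule.comap_map_eq, sup_eq_left.mpr hB]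
  have FWD : ∀ V : Submodule F (Fin k → F),
      ((Module.finrank F ↥V : ℤ) = r ∧
        Module.finrank F ↥(U2 ⊓ U3 ⊓ V) = 1 ∧
        (Module.finrank F ↥(U2 ⊓ V) : ℤ) = v2 ∧
        (Module.finrank F ↥(U3 ⊓ V) : ℤ) = v3) →
      U2 ⊓ U3 ≤ V ∧
      ((Module.finrank F ↥(V.map f) : ℤ) = r - 1 ∧
        (Module.finrank F ↥(W2 ⊓ V.map f) : ℤ) = v2 - 1 ∧
        (Module.finrank F ↥(W3 ⊓ V.map f) : ℤ) = v3 - 1) := by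
    rintro V ⟨hVr, hV1, hv2, hv3⟩
    have heq : U2 ⊓ U3 ⊓ V = U2 ⊓ U3 :=
      Submodule.eq_of_le_of_finrank_eq inf_le_left (by rw [hV1, hd1])
    have hU1V : U2 ⊓ U3 ≤ V := by
      conv_lhs => rw [← heq]
      exact inf_le_right
    have hkerV : LinearMap.ker f ≤ V := by rw [hker]; exact hU1V
    refine ⟨hU1V, ?_, ?_, ?_⟩
    · have h := key V hU1V
      omega
    · rw [← hm2, mapinf U2 V hkerV]
      have h := key (U2 ⊓ V) (le_inf inf_le_left hU1V)
      omega
    · rw [← hm3, mapinf U3 V hkerV]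
      have h := key (U3 ⊓ V) (le_inf inf_le_right hU1V)
      omega
  have BWD : ∀ W : Submodule F (Fin m → F),
      ((Module.finrank F ↥W : ℤ) = r - 1 ∧
        (Module.finrank F ↥(W2 ⊓ W) : ℤ) = v2 - 1 ∧
        (Module.finrank F ↥(W3 ⊓ W) : ℤ) = v3 - 1) →
      ((Module.finrank F ↥(W.comap f) : ℤ) = r ∧
        Module.finrank F ↥(U2 ⊓ U3 ⊓ W.comap f) = 1 ∧
        (Module.finrank F ↥(U2 ⊓ W.comap f) : ℤ) = v2 ∧
        (Module.finrank F ↥(U3 ⊓ W.comap f) : ℤ) = v3) := by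
    rintro W ⟨hWr, hw2, hw3⟩
    have hkerle : LinearMap.ker f ≤ W.comap f := by
      intro x hx
      rw [LinearMap.mem_ker] at hx
      rw [Submodule.mem_comap, hx]
      exact zero_mem W
    have hU1le : U2 ⊓ U3 ≤ W.comap f := by rw [← hker]; exact hkerle
    have hWmap : (W.comap f).map f = W := Submodule.map_comap_eq_of_surjective hsurj W
    refine ⟨?_, ?_, ?_, ?_⟩
    · have h := key (W.comap f) hU1le
      rw [hWmap] at h
      omega
    · rw [inf_eq_left.mpr hU1le]
      exact hd1
    · have h := key (U2 ⊓ W.comap f) (le_inf inf_le_left hU1le)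
      have h2 : (U2 ⊓ W.comap f).map f = W2 ⊓ W := by
        rw [← Submodule.map_inf_eq_map_inf_comap, hm2]
      rw [h2] at h
      omega
    · have h := key (U3 ⊓ W.comap f) (le_inf inf_le_right hU1le)
      have h2 : (U3 ⊓ W.comap f).map f = W3 ⊓ W := by
        rw [← Submodule.map_inf_eq_map_inf_comap, hm3]
      rw [h2] at h
      omega
  refine Nat.card_congr ⟨fun V => ⟨V.1.map f, (FWD V.1 V.2).2⟩,
    fun W => ⟨W.1.comap f, BWD W.1 W.2⟩, ?_, ?_⟩
  · rintro ⟨V, hV⟩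
    apply Subtype.ext
    have hU1V := (FWD V hV).1
    simp only
    rw [Submodule.comap_map_eq, hker, sup_eq_left.mpr hU1V]
  · rintro ⟨W, hW⟩
    apply Subtype.ext
    simp only
    exact Submodule.map_comap_eq_of_surjective hsurj W

end AuxStmt11

/-- Lemma `xx14` (c): counting subspaces meeting `U_1 = U_2 ∩ U_3` in
dimension one reduces to a count in `F_q^{k-1}`. -/
theorem stmt_11 (q : ℕ) (F : Type) [Field F] [Fintype F] (hq : Fintype.card F = q)
    (k u2 u3 : ℕ) (h12 : 1 < u2) (h23 : u2 < u3) (h3k : u3 < k)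
    (U2 U3 : Submodule F (Fin k → F))
    (hU2 : Module.finrank F ↥U2 = u2) (hU3 : Module.finrank F ↥U3 = u3)
    (hU23 : Module.finrank F ↥(U2 ⊓ U3) = 1)
    (W2 W3 : Submodule F (Fin (k - 1) → F))
    (hW2 : Module.finrank F ↥W2 = u2 - 1) (hW3 : Module.finrank F ↥W3 = u3 - 1)
    (hW23 : W2 ⊓ W3 = ⊥)
    (r v2 v3 : ℤ) :
    Nat.card {V : Submodule F (Fin k → F) //
        (Module.finrank F ↥V : ℤ) = r ∧
        Module.finrank F ↥(U2 ⊓ U3 ⊓ V) = 1 ∧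
        (Module.finrank F ↥(U2 ⊓ V) : ℤ) = v2 ∧
        (Module.finrank F ↥(U3 ⊓ V) : ℤ) = v3} =
      Nat.card {W : Submodule F (Fin (k - 1) → F) //
        (Module.finrank F ↥W : ℤ) = r - 1 ∧
        (Module.finrank F ↥(W2 ⊓ W) : ℤ) = v2 - 1 ∧
        (Module.finrank F ↥(W3 ⊓ W) : ℤ) = v3 - 1} := by
  obtain ⟨f, hs, hk, hm2, hm3⟩ := exists_good_map u2 u3 (by omega) (by omega)
    U2 U3 hU2 hU3 hU23 W2 W3 hW2 hW3 hW23
  exact card_eq_of_good_map U2 U3 W2 W3 f hs hk hU23 hm2 hm3 r v2 v3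
end

section
/- Let q be a prime power and let integers satisfy 1 < u_2 < u_3 < k and 0 ≤ r < k. Let U_2, U_3 be subspaces of F_q^k with dim U_2 = u_2, dim U_3 = u_3 and dim(U_2 ∩ U_3) = 1, and set U_1 = U_2 ∩ U_3. Then for any integers v_2, v_3, the number of r-dimensional subspaces V of F_q^k with dim(U_1 ∩ V) = 0, dim(U_2 ∩ V) = v_2 and dim(U_3 ∩ V) = v_3 equals q^r times the number of (r+1)-dimensional subspaces Ṽ of F_q^k with dim(U_1 ∩ Ṽ) = 1, dim(U_2 ∩ Ṽ) = v_2 + 1 and dim(U_3 ∩ Ṽ) = v_3 + 1. -/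
/-!
Joining with the line `U₁ = U₂ ⊓ U₃` maps the `r`-dimensional subspaces `V` with `U₁ ⊓ V = ⊥`
onto the `(r + 1)`-dimensional subspaces containing `U₁`, and by the modular law it raises
`dim (U₂ ⊓ V)` and `dim (U₃ ⊓ V)` by one. The fibre over `V'` is the set of complements of `U₁`
in `V'`; these are the kernels of the projections `V' → U₁`, which form a torsor under
`Hom(V' ⧸ U₁, U₁)`, so each fibre has `q ^ r` elements.
-/

open Finset

open Module

namespace Submodule

def projectionEquivLinearMapQuotient {R M : Type*} [Ring R] [AddCommGroup M] [Module R M]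
    (p : Submodule R M) (f₀ : M →ₗ[R] p) (hf₀ : ∀ x : p, f₀ x = x) :
    {f : M →ₗ[R] p // ∀ x : p, f x = x} ≃ (M ⧸ p →ₗ[R] p) where
  toFun f := p.liftQ (f.1 - f₀) fun x hx => by simp [f.2 ⟨x, hx⟩, hf₀ ⟨x, hx⟩]
  invFun g := ⟨f₀ + g.comp p.mkQ, fun x => by
    simp [(Quotient.mk_eq_zero p).mpr x.2, hf₀ x]⟩
  left_inv f := Subtype.ext <| LinearMap.ext fun x => by simp
  right_inv g := linearMap_qext _ <| LinearMap.ext fun x => by simp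

variable {K M : Type*} [Field K] [AddCommGroup M] [Module K M] [FiniteDimensional K M]

theorem finrank_sup_of_disjoint {U V : Submodule K M} (h : Disjoint U V) :
    finrank K ↥(U ⊔ V) = finrank K U + finrank K V := by
  have := finrank_sup_add_finrank_inf_eq U V
  rwa [disjoint_iff.mp h, finrank_bot, add_zero] at this

theorem finrank_inf_sup_of_le_of_disjoint {U V W : Submodule K M} (hUW : U ≤ W)
    (h : Disjoint U V) : finrank K ↥(W ⊓ (U ⊔ V)) = finrank K U + finrank K ↥(W ⊓ V) := by
  rw [inf_comm, sup_inf_assoc_of_le V hUW, inf_comm,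
    finrank_sup_of_disjoint (h.mono_right inf_le_right)]

variable [Fintype K]

theorem card_isCompl (p : Submodule K M) :
    Nat.card {q : Submodule K M // IsCompl p q} =
      Fintype.card K ^ ((finrank K M - finrank K p) * finrank K p) := by
  obtain ⟨q₀, hq₀⟩ := p.exists_isCompl
  obtain ⟨f₀, hf₀⟩ := p.isComplEquivProj ⟨q₀, hq₀⟩
  have : Finite (M ⧸ p →ₗ[K] p) := Module.finite_of_finite K
  have : Fintype (M ⧸ p →ₗ[K] p) := .ofFinite _
  rw [Nat.card_congr (p.isComplEquivProj.trans (p.projectionEquivLinearMapQuotient f₀ hf₀)),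
    Nat.card_eq_fintype_card, card_eq_pow_finrank (K := K), finrank_linearMap,
    finrank_quotient]

theorem card_disjoint_sup_eq_of_le {U W : Submodule K M} (hUW : U ≤ W) :
    Nat.card {V : Submodule K M // Disjoint U V ∧ U ⊔ V = W} =
      Fintype.card K ^ ((finrank K W - finrank K U) * finrank K U) := by
  have hp : finrank K ↥(W.mapIic.symm ⟨U, hUW⟩) = finrank K U := by
    rw [← finrank_map_subtype_eq, ← coe_mapIic_apply, W.mapIic.apply_symm_apply]
  let e : {V : Submodule K M // Disjoint U V ∧ U ⊔ V = W} ≃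
      {V : Set.Iic W // IsCompl ⟨U, hUW⟩ V} :=
    { toFun V := ⟨⟨V, V.2.2.subst (motive := (V.1 ≤ ·)) le_sup_right⟩, Set.Iic.isCompl_iff.2 V.2⟩
      invFun V := ⟨V.1, Set.Iic.isCompl_iff.1 V.2⟩
      left_inv _ := rfl
      right_inv _ := rfl }
  rw [Nat.card_congr (e.trans (W.mapIic.symm.toEquiv.subtypeEquiv
      fun _ => W.mapIic.symm.isCompl_iff)), card_isCompl, hp]

theorem card_disjoint_eq_pow_mul_card_le (U : Submodule K M) (P : Submodule K M → Prop) (r : ℕ) :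
    Nat.card {V : Submodule K M // finrank K V = r ∧ Disjoint U V ∧ P (U ⊔ V)} =
      Fintype.card K ^ (r * finrank K U) *
        Nat.card {W : Submodule K M // finrank K W = r + finrank K U ∧ U ≤ W ∧ P W} := by
  have : Finite M := Module.finite_of_finite K
  let e : {V : Submodule K M // finrank K V = r ∧ Disjoint U V ∧ P (U ⊔ V)} ≃
      Σ W : {W : Submodule K M // finrank K W = r + finrank K U ∧ U ≤ W ∧ P W},
        {V : Submodule K M // Disjoint U V ∧ U ⊔ V = W} :=
    { toFun V := ⟨⟨U ⊔ V, by rw [finrank_sup_of_disjoint V.2.2.1, V.2.1, add_comm], le_sup_left,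
        V.2.2.2⟩, V, V.2.2.1, rfl⟩
      invFun x := ⟨x.2, by
          have := x.1.2.1
          rw [← x.2.2.2, finrank_sup_of_disjoint x.2.2.1] at this
          omega, x.2.2.1, by rw [x.2.2.2]; exact x.1.2.2.2⟩
      left_inv _ := rfl
      right_inv := by
        rintro ⟨⟨W, hW⟩, V, hV⟩
        obtain rfl : W = U ⊔ V := hV.2.symm
        rfl }
  have hfibre (W : {W : Submodule K M // finrank K W = r + finrank K U ∧ U ≤ W ∧ P W}) :
      Nat.card {V : Submodule K M // Disjoint U V ∧ U ⊔ V = W} =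
        Fintype.card K ^ (r * finrank K U) := by
    rw [card_disjoint_sup_eq_of_le W.2.2.1, W.2.1, Nat.add_sub_cancel]
  have : Fintype {W : Submodule K M // finrank K W = r + finrank K U ∧ U ≤ W ∧ P W} := .ofFinite _
  rw [Nat.card_congr e, Nat.card_sigma, Finset.sum_congr rfl fun W _ => hfibre W,
    Finset.sum_const, Finset.card_univ, smul_eq_mul, mul_comm, Nat.card_eq_fintype_card]

end Submodule

open Submodule in
theorem stmt_12_general (q : ℕ) (F : Type) [Field F] [Fintype F] (hq : Fintype.card F = q)
    (k : ℕ) (r : ℕ)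
    (U2 U3 : Submodule F (Fin k → F))
    (hU23 : Module.finrank F ↥(U2 ⊓ U3) = 1)
    (v2 v3 : ℤ) :
    Nat.card {V : Submodule F (Fin k → F) //
        Module.finrank F ↥V = r ∧
        Module.finrank F ↥(U2 ⊓ U3 ⊓ V) = 0 ∧
        (Module.finrank F ↥(U2 ⊓ V) : ℤ) = v2 ∧
        (Module.finrank F ↥(U3 ⊓ V) : ℤ) = v3} =
      q ^ r * Nat.card {V' : Submodule F (Fin k → F) //
        Module.finrank F ↥V' = r + 1 ∧
        Module.finrank F ↥(U2 ⊓ U3 ⊓ V') = 1 ∧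
        (Module.finrank F ↥(U2 ⊓ V') : ℤ) = v2 + 1 ∧
        (Module.finrank F ↥(U3 ⊓ V') : ℤ) = v3 + 1} := by
  set U₁ := U2 ⊓ U3
  let P (W : Submodule F (Fin k → F)) : Prop :=
    (finrank F ↥(U2 ⊓ W) : ℤ) = v2 + 1 ∧ (finrank F ↥(U3 ⊓ W) : ℤ) = v3 + 1
  have avoids (V : Submodule F (Fin k → F)) :
      (finrank F ↥(U₁ ⊓ V) = 0 ∧ (finrank F ↥(U2 ⊓ V) : ℤ) = v2 ∧
        (finrank F ↥(U3 ⊓ V) : ℤ) = v3) ↔ Disjoint U₁ V ∧ P (U₁ ⊔ V) := by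
    rw [finrank_eq_zero, ← disjoint_iff]
    refine and_congr_right fun h => ?_
    dsimp only [P]
    rw [finrank_inf_sup_of_le_of_disjoint inf_le_left h,
      finrank_inf_sup_of_le_of_disjoint inf_le_right h, hU23]
    push_cast
    omega
  have contains (W : Submodule F (Fin k → F)) : finrank F ↥(U₁ ⊓ W) = 1 ↔ U₁ ≤ W :=
    ⟨fun h => inf_eq_left.mp (eq_of_le_of_finrank_eq inf_le_left (h.trans hU23.symm)),
      fun h => by rw [inf_eq_left.mpr h, hU23]⟩
  rw [Nat.card_congr (Equiv.subtypeEquivRight fun V => and_congr_right fun _ => avoids V),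
    card_disjoint_eq_pow_mul_card_le, hU23, hq, mul_one]
  simp only [contains, P]

/-- Lemma `xx14` (d): counting subspaces avoiding `U_1 = U_2 ∩ U_3` in
terms of subspaces containing it. -/
theorem stmt_12 (q : ℕ) (F : Type) [Field F] [Fintype F] (hq : Fintype.card F = q)
    (k u2 u3 : ℕ) (h12 : 1 < u2) (h23 : u2 < u3) (h3k : u3 < k)
    (r : ℕ) (hr : r < k)
    (U2 U3 : Submodule F (Fin k → F))
    (hU2 : Module.finrank F ↥U2 = u2) (hU3 : Module.finrank F ↥U3 = u3)
    (hU23 : Module.finrank F ↥(U2 ⊓ U3) = 1)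
    (v2 v3 : ℤ) :
    Nat.card {V : Submodule F (Fin k → F) //
        Module.finrank F ↥V = r ∧
        Module.finrank F ↥(U2 ⊓ U3 ⊓ V) = 0 ∧
        (Module.finrank F ↥(U2 ⊓ V) : ℤ) = v2 ∧
        (Module.finrank F ↥(U3 ⊓ V) : ℤ) = v3} =
      q ^ r * Nat.card {V' : Submodule F (Fin k → F) //
        Module.finrank F ↥V' = r + 1 ∧
        Module.finrank F ↥(U2 ⊓ U3 ⊓ V') = 1 ∧
        (Module.finrank F ↥(U2 ⊓ V') : ℤ) = v2 + 1 ∧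
        (Module.finrank F ↥(U3 ⊓ V') : ℤ) = v3 + 1} :=
  stmt_12_general q F hq k r U2 U3 hU23 v2 v3
end

section
/- Let q be a prime power and let integers satisfy 1 = u_1 < u_2 < u_3 < k and u_2 + u_3 ≤ k + 1. Set n = (q^k - 1)/(q - 1) - (q^{u_2} - 1)/(q - 1) - (q^{u_3} - 1)/(q - 1) + 1 and d = q^{k-1} - q^{u_2-1} - q^{u_3-1}. Then there exists an [n,k]_q linear code C with minimum Hamming distance d such that for every 1 ≤ r ≤ k, the number of integers j with A_j^r(C) ≠ 0 is at most 2·min{u_2·u_3, (r + 1)^2, (k - r + 1)^2}. -/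
open Finset

/-!
Take subspaces `A`, `B` of `V = F^k` of dimensions `u₂`, `u₃` meeting in a line, and use one
representative of every projective point of `V` off `A ∪ B` as a column of a generator matrix.
An `r`-dimensional subcode is cut out by a subspace `K` of codimension `r`, and its support weight
is the number of columns off `K`. Inclusion–exclusion over `A`, `B`, `K` gives
`(q - 1) · weight = q^k - q^u₂ - q^u₃ + q - q^(k-r) + q^a + q^b - q^c`, where `a`, `b`, `c` are the
dimensions of `A ⊓ K`, `B ⊓ K`, `A ⊓ B ⊓ K`. So the weight depends only on `(a, b, c)`; here
`c ∈ {0, 1}`, and for each `c` the dimension `a` takes at most `min u₂ (r + 1) (k - r + 1)` values,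
and `b` at most `min u₃ (r + 1) (k - r + 1)`. For a hyperplane `K` one has `a ≥ u₂ - 1` and `b ≥ u₃ - 1`, with
equality and `c = 1` for a hyperplane through `A ⊓ B` containing neither `A` nor `B`: this gives
the minimum distance.
-/

open Module Projectivization
open scoped LinearAlgebra.Projectivization

theorem Nat.pow_add_pow_lt_pow {q a b c : ℕ} (hq : 2 ≤ q) (hab : a < b) (hbc : b < c) :
    q ^ a + q ^ b < q ^ c := by
  have h1 : q ^ a < q ^ b := Nat.pow_lt_pow_right hq hab
  have h2 : q ^ b * 2 ≤ q ^ b * q := Nat.mul_le_mul_left _ hq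
  have h3 : q ^ b * q ≤ q ^ c := by rw [← pow_succ]; exact Nat.pow_le_pow_right (by omega) hbc
  omega

theorem cast_pow_sub_one_div_mul {q : ℕ} (hq : 2 ≤ q) (m : ℕ) :
    (((q ^ m - 1) / (q - 1) : ℕ) : ℤ) * (q - 1) = q ^ m - 1 := by
  rw [← Nat.geomSum_eq hq]
  push_cast
  exact geom_sum_mul _ _

theorem sub_one_mul_cast_length {q k u v : ℕ} (hq : 2 ≤ q) (h : q ^ u + q ^ v < q ^ k) :
    ((q : ℤ) - 1) * ((q ^ k - 1) / (q - 1) - (q ^ u - 1) / (q - 1) - (q ^ v - 1) / (q - 1) + 1 : ℕ)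
      = q ^ k - q ^ u - q ^ v + q := by
  have hk := cast_pow_sub_one_div_mul hq k
  have hu := cast_pow_sub_one_div_mul hq u
  have hv := cast_pow_sub_one_div_mul hq v
  generalize (q ^ k - 1) / (q - 1) = Nk at hk ⊢
  generalize (q ^ u - 1) / (q - 1) = Nu at hu ⊢
  generalize (q ^ v - 1) / (q - 1) = Nv at hv ⊢
  have hq' : (1 : ℤ) < q := by exact_mod_cast hq
  have h' : (q : ℤ) ^ u + q ^ v < q ^ k := by exact_mod_cast h
  have hle : Nu + Nv ≤ Nk := by
    have : ((Nu + Nv : ℕ) : ℤ) * (q - 1) < (Nk : ℤ) * (q - 1) := by push_cast; linarith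
    exact_mod_cast (lt_of_mul_lt_mul_right this (by linarith)).le
  rw [Nat.cast_add, Nat.cast_sub (by omega), Nat.cast_sub (by omega)]
  linear_combination hk - hu - hv

theorem sub_one_mul_cast_pow_sub_pow_sub_pow {q k u v : ℕ} (hq : 2 ≤ q) (hu : 1 < u)
    (huv : u < v) (hvk : v < k) :
    ((q : ℤ) - 1) * (q ^ (k - 1) - q ^ (u - 1) - q ^ (v - 1) : ℕ)
      = q ^ k - q ^ (k - 1) - q ^ u + q ^ (u - 1) - q ^ v + q ^ (v - 1) := by
  obtain ⟨k, rfl⟩ := Nat.exists_eq_add_of_le (by omega : 1 ≤ k)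
  obtain ⟨u, rfl⟩ := Nat.exists_eq_add_of_le hu.le
  obtain ⟨v, rfl⟩ := Nat.exists_eq_add_of_le (by omega : 1 ≤ v)
  have h : q ^ u + q ^ v < q ^ k := Nat.pow_add_pow_lt_pow hq (by omega) (by omega)
  simp only [Nat.add_sub_cancel_left]
  rw [Nat.cast_sub (by omega), Nat.cast_sub (by omega)]
  push_cast
  ring

theorem Set.ncard_union_union_add_ncard_inter {α : Type*} [Finite α] (a b c : Set α) :
    (a ∪ b ∪ c).ncard + (a ∩ b).ncard + (a ∩ c).ncard + (b ∩ c).ncard =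
      a.ncard + b.ncard + c.ncard + (a ∩ b ∩ c).ncard := by
  have hab := Set.ncard_union_add_ncard_inter a b
  have habc := Set.ncard_union_add_ncard_inter (a ∪ b) c
  have hacbc := Set.ncard_union_add_ncard_inter (a ∩ c) (b ∩ c)
  rw [Set.union_inter_distrib_right] at habc
  have : a ∩ c ∩ (b ∩ c) = a ∩ b ∩ c := by
    ext; simp only [Set.mem_inter_iff]; tauto
  rw [this] at hacbc
  omega

section Counting

variable {F V : Type*} [Field F] [AddCommGroup V] [Module F V]

theorem Projectivization.mk_rep_mem_iff {W : Submodule F V} {v : V} (hv : v ≠ 0) :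
    (mk F v hv).rep ∈ W ↔ v ∈ W := by
  obtain ⟨a, ha⟩ := exists_smul_eq_mk_rep F v hv
  rw [← ha, W.smul_mem_iff']

theorem Projectivization.natCard_preimage_mk' [Finite F] (S : Set (ℙ F V)) :
    Nat.card {v : {v : V // v ≠ 0} // mk' F v ∈ S} = Nat.card S * (Nat.card F - 1) := by
  rw [Nat.card_congr ((nonZeroEquivProjectivizationProdUnits F V).subtypeEquiv
      (p := fun v => mk' F v ∈ S) (q := fun x => x.1 ∈ S) fun _ => Iff.rfl),
    Nat.card_congr Equiv.prodSubtypeFstEquivSubtypeProd, Nat.card_prod, Nat.card_units]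

variable [Finite F] [FiniteDimensional F V]

theorem Submodule.natCard_notMem_three (A B K : Submodule F V) :
    ((Nat.card {v : V // v ∉ A ∧ v ∉ B ∧ v ∉ K} : ℕ) : ℤ) =
      Nat.card F ^ finrank F V - Nat.card F ^ finrank F A - Nat.card F ^ finrank F B
        - Nat.card F ^ finrank F K + Nat.card F ^ finrank F ↥(A ⊓ B)
        + Nat.card F ^ finrank F ↥(A ⊓ K) + Nat.card F ^ finrank F ↥(B ⊓ K)
        - Nat.card F ^ finrank F ↥(A ⊓ B ⊓ K) := by
  have : Finite V := Module.finite_of_finite F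
  have hcard (W : Submodule F V) : (W : Set V).ncard = Nat.card F ^ finrank F W := by
    rw [← Nat.card_coe_set_eq, ← natCard_eq_pow_finrank]; rfl
  have hie := Set.ncard_union_union_add_ncard_inter (A : Set V) B K
  have hcompl := Set.ncard_add_ncard_compl ((A : Set V) ∪ B ∪ K)
  simp only [← Submodule.coe_inf, hcard] at hie
  rw [natCard_eq_pow_finrank (K := F)] at hcompl
  have hset : Nat.card {v : V // v ∉ A ∧ v ∉ B ∧ v ∉ K} = ((A : Set V) ∪ B ∪ K)ᶜ.ncard := by
    rw [← Nat.card_coe_set_eq]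
    exact Nat.card_congr (Equiv.subtypeEquivRight fun v => by simp [and_assoc])
  rw [hset]
  zify at hie hcompl
  linarith

theorem sub_one_mul_natCard_rep_notMem (A B K : Submodule F V) :
    ((Nat.card F : ℤ) - 1) * Nat.card {P : ℙ F V // P.rep ∉ A ∧ P.rep ∉ B ∧ P.rep ∉ K} =
      Nat.card F ^ finrank F V - Nat.card F ^ finrank F A - Nat.card F ^ finrank F B
        - Nat.card F ^ finrank F K + Nat.card F ^ finrank F ↥(A ⊓ B)
        + Nat.card F ^ finrank F ↥(A ⊓ K) + Nat.card F ^ finrank F ↥(B ⊓ K)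
        - Nat.card F ^ finrank F ↥(A ⊓ B ⊓ K) := by
  set S : Set (ℙ F V) := {P | P.rep ∉ A ∧ P.rep ∉ B ∧ P.rep ∉ K}
  have hmem (v : V) (hv : v ≠ 0) : mk F v hv ∈ S ↔ v ∉ A ∧ v ∉ B ∧ v ∉ K := by
    simp only [S, Set.mem_ofPred_eq, mk_rep_mem_iff]
  have hne {v : V} (hv : v ∉ A ∧ v ∉ B ∧ v ∉ K) : v ≠ 0 := by
    rintro rfl
    exact hv.2.2 K.zero_mem
  have hcount : Nat.card {v : V // v ∉ A ∧ v ∉ B ∧ v ∉ K} =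
      Nat.card {P : ℙ F V // P.rep ∉ A ∧ P.rep ∉ B ∧ P.rep ∉ K} * (Nat.card F - 1) :=
    (Nat.card_congr
      { toFun := fun v => ⟨⟨v, hne v.2⟩, (hmem _ _).2 v.2⟩
        invFun := fun w => ⟨w.1, (hmem _ w.1.2).1 w.2⟩
        left_inv := fun _ => rfl
        right_inv := fun _ => rfl }).trans (natCard_preimage_mk' S)
  have hq : 1 ≤ Nat.card F := Nat.card_pos
  rw [← Submodule.natCard_notMem_three, hcount, Nat.cast_mul, Nat.cast_sub hq]
  push_cast
  ring

end Counting

def interDimRange (u c r k : ℕ) : Finset ℕ := Finset.Icc (max c (u - r)) (min (u + c - 1) (k - r))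

theorem card_interDimRange_le {u c : ℕ} (hu : 1 ≤ u) (hc : c ≤ 1) (r k : ℕ) :
    (interDimRange u c r k).card ≤ min u (min (r + 1) (k - r + 1)) := by
  rw [interDimRange, Nat.card_Icc]
  omega

theorem ncard_le_of_forall_eq_interDimRange {J : Set ℕ} {u v r k : ℕ} (hu : 1 ≤ u) (hv : 1 ≤ v)
    (φ : ℕ → ℕ → ℕ → ℕ)
    (hJ : ∀ j ∈ J, ∃ c ≤ 1, ∃ a ∈ interDimRange u c r k, ∃ b ∈ interDimRange v c r k,
      φ a b c = j) :
    J.ncard ≤ 2 * min (u * v) (min ((r + 1) ^ 2) ((k - r + 1) ^ 2)) := by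
  classical
  set T := (Finset.range 2).biUnion fun c =>
    (interDimRange u c r k ×ˢ interDimRange v c r k).image fun p => φ p.1 p.2 c
  have hJT : J ⊆ T := by
    intro j hj
    obtain ⟨c, hc, a, ha, b, hb, rfl⟩ := hJ j hj
    exact Finset.mem_biUnion.mpr ⟨c, Finset.mem_range.mpr (by omega),
      Finset.mem_image.mpr ⟨(a, b), Finset.mem_product.mpr ⟨ha, hb⟩, rfl⟩⟩
  have hbox (c : ℕ) (hc : c ≤ 1) :
      ((interDimRange u c r k ×ˢ interDimRange v c r k).image fun p => φ p.1 p.2 c).card ≤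
        min u (min (r + 1) (k - r + 1)) * min v (min (r + 1) (k - r + 1)) :=
    Finset.card_image_le.trans <| (Finset.card_product _ _).trans_le <|
      Nat.mul_le_mul (card_interDimRange_le hu hc r k) (card_interDimRange_le hv hc r k)
  have hmin : min u (min (r + 1) (k - r + 1)) * min v (min (r + 1) (k - r + 1)) ≤
      min (u * v) (min ((r + 1) ^ 2) ((k - r + 1) ^ 2)) := by
    simp only [le_min_iff, sq]
    refine ⟨Nat.mul_le_mul (min_le_left _ _) (min_le_left _ _), Nat.mul_le_mul ?_ ?_,
      Nat.mul_le_mul ?_ ?_⟩ <;> omega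
  calc J.ncard ≤ T.card := by simpa using Set.ncard_le_ncard hJT
    _ ≤ ∑ c ∈ Finset.range 2, ((interDimRange u c r k ×ˢ interDimRange v c r k).image
          fun p => φ p.1 p.2 c).card := Finset.card_biUnion_le
    _ ≤ 2 * min (u * v) (min ((r + 1) ^ 2) ((k - r + 1) ^ 2)) := by
      simp only [Finset.sum_range_succ, Finset.sum_range_zero, zero_add]
      have := hbox 0 (by omega)
      have := hbox 1 le_rfl
      omega

theorem finrank_inf_mem_interDimRange {F : Type*} [Field F] {V : Type*} [AddCommGroup V]
    [Module F V] [FiniteDimensional F V] {L W K : Submodule F V} (hLW : L ≤ W)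
    (hL : finrank F L = 1) {r : ℕ} (hK : finrank F K + r = finrank F V) :
    finrank F ↥(W ⊓ K) ∈ interDimRange (finrank F W) (finrank F ↥(L ⊓ K)) r (finrank F V) := by
  have hc1 : finrank F ↥(L ⊓ K) ≤ 1 := hL ▸ Submodule.finrank_mono inf_le_left
  have hca : finrank F ↥(L ⊓ K) ≤ finrank F ↥(W ⊓ K) :=
    Submodule.finrank_mono (inf_le_inf_right K hLW)
  have haW : finrank F ↥(W ⊓ K) ≤ finrank F W := Submodule.finrank_mono inf_le_left
  have haK : finrank F ↥(W ⊓ K) ≤ finrank F K := Submodule.finrank_mono inf_le_right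
  have hsup := Submodule.finrank_sup_add_finrank_inf_eq W K
  have hle := Submodule.finrank_le (W ⊔ K)
  have hc0 : finrank F ↥(L ⊓ K) = 0 → finrank F ↥(W ⊓ K) < finrank F W := by
    intro h0
    refine haW.lt_of_ne fun heq => ?_
    have hWK : W ≤ K := inf_eq_left.mp (Submodule.eq_of_le_of_finrank_eq inf_le_left heq)
    rw [inf_eq_left.mpr (hLW.trans hWK), hL] at h0
    exact one_ne_zero h0
  rw [interDimRange, Finset.mem_Icc]
  omega

section Coordinates

variable {F : Type*} [Field F]

theorem finrank_supported_Ico {k a b : ℕ} (hb : b ≤ k) :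
    finrank F (Finsupp.supported F F {i : Fin k | a ≤ i.val ∧ i.val < b}) = b - a := by
  rw [(Finsupp.supportedEquivFinsupp _).finrank_eq, finrank_finsupp_self,
    ← Nat.card_eq_fintype_card, Nat.card_coe_set_eq, ← Set.ncard_image_of_injective _ Fin.val_injective]
  have : Fin.val '' {i : Fin k | a ≤ i.val ∧ i.val < b} = ↑(Finset.Ico a b) := by
    ext m
    simp only [Set.mem_image, Set.mem_ofPred_eq, Finset.coe_Ico, Set.mem_Ico]
    exact ⟨fun ⟨i, hi, him⟩ => him ▸ hi, fun hm => ⟨⟨m, by omega⟩, hm, rfl⟩⟩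
  rw [this, Set.ncard_coe_finset, Nat.card_Ico]

theorem exists_submodules_finrank_inf_eq_one {k u v : ℕ} (hu : 1 ≤ u) (hv : 1 ≤ v)
    (h : u + v ≤ k + 1) :
    ∃ A B : Submodule F (Fin k →₀ F), finrank F A = u ∧ finrank F B = v ∧
      finrank F ↥(A ⊓ B) = 1 := by
  refine ⟨Finsupp.supported F F {i : Fin k | 0 ≤ i.val ∧ i.val < u},
    Finsupp.supported F F {i : Fin k | u - 1 ≤ i.val ∧ i.val < u + v - 1},
    by rw [finrank_supported_Ico (by omega)]; omega,
    by rw [finrank_supported_Ico (by omega)]; omega, ?_⟩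
  rw [← Finsupp.supported_inter]
  have : {i : Fin k | 0 ≤ i.val ∧ i.val < u} ∩ {i : Fin k | u - 1 ≤ i.val ∧ i.val < u + v - 1} =
      {i : Fin k | u - 1 ≤ i.val ∧ i.val < u} := by
    ext i; simp only [Set.mem_inter_iff, Set.mem_ofPred_eq]; omega
  rw [this, finrank_supported_Ico (by omega)]
  omega

end Coordinates

section EvaluationCode

variable {F : Type} [Field F] {V : Type*} [AddCommGroup V] [Module F V] {n : ℕ}

variable (F) in
/-- The code whose generator matrix has the columns `v i`: its codewords are `(f (v i))ᵢ`. -/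
def evalMap (v : Fin n → V) : Dual F V →ₗ[F] (Fin n → F) :=
  LinearMap.pi fun i => Dual.eval F V (v i)

@[simp] theorem evalMap_apply (v : Fin n → V) (f : Dual F V) (i : Fin n) :
    evalMap F v f i = f (v i) := rfl

theorem suppWt_map_evalMap (v : Fin n → V) (Φ : Submodule F (Dual F V)) :
    suppWt (Φ.map (evalMap F v)) = Nat.card {i // v i ∉ Φ.dualCoannihilator} := by
  refine Nat.card_congr (Equiv.subtypeEquivRight fun i => ?_)
  simp [Submodule.mem_dualCoannihilator]

theorem hwt_evalMap (v : Fin n → V) (f : Dual F V) :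
    hwt (evalMap F v f) = Nat.card {i // v i ∉ LinearMap.ker f} := rfl

theorem exists_suppWt_eq_of_le_range_evalMap [FiniteDimensional F V] {v : Fin n → V}
    (hv : Function.Injective (evalMap F v)) {U : Submodule F (Fin n → F)}
    (hU : U ≤ LinearMap.range (evalMap F v)) :
    ∃ K : Submodule F V, finrank F K + finrank F U = finrank F V ∧
      suppWt U = Nat.card {i // v i ∉ K} := by
  set Φ := U.comap (evalMap F v)
  have hΦ : Φ.map (evalMap F v) = U := Submodule.map_comap_eq_of_le hU
  refine ⟨Φ.dualCoannihilator, ?_, by rw [← hΦ, suppWt_map_evalMap]⟩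
  rw [← hΦ, ← (Submodule.equivMapOfInjective _ hv Φ).finrank_eq, add_comm]
  exact Subspace.finrank_add_finrank_dualCoannihilator_eq Φ

theorem finrank_range_evalMap [FiniteDimensional F V] {v : Fin n → V}
    (hv : Function.Injective (evalMap F v)) :
    finrank F (LinearMap.range (evalMap F v)) = finrank F V := by
  rw [LinearMap.finrank_range_of_inj hv, Subspace.dual_finrank_eq]

end EvaluationCode

@[simp] theorem hwt_zero {F : Type} [Zero F] {n : ℕ} : hwt (0 : Fin n → F) = 0 := by
  simp [hwt]

theorem minDist_eq_of_forall_le {F : Type} [Field F] {n d : ℕ} {C : Submodule F (Fin n → F)}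
    (hle : ∀ c ∈ C, c ≠ 0 → d ≤ hwt c) (hd : ∃ c ∈ C, c ≠ 0 ∧ hwt c = d) : minDist C = d := by
  obtain ⟨c, hc, hc0, rfl⟩ := hd
  refine le_antisymm (Nat.sInf_le ⟨c, hc, hc0, rfl⟩) (le_csInf ⟨_, c, hc, hc0, rfl⟩ ?_)
  rintro _ ⟨c', hc', hc0', rfl⟩
  exact hle c' hc' hc0'

theorem Submodule.exists_dual_le_ker_not_le_ker {K V : Type*} [Field K] [AddCommGroup V]
    [Module K V] {L A B : Submodule K V} (hA : L < A) (hB : L < B) :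
    ∃ f : Dual K V, L ≤ LinearMap.ker f ∧ ¬ A ≤ LinearMap.ker f ∧ ¬ B ≤ LinearMap.ker f := by
  obtain ⟨x, hxA, hxL⟩ := SetLike.exists_of_lt hA
  obtain ⟨y, hyB, hyL⟩ := SetLike.exists_of_lt hB
  obtain ⟨f, hfx, hfL⟩ := exists_dual_map_eq_bot_of_notMem hxL inferInstance
  obtain ⟨g, hgy, hgL⟩ := exists_dual_map_eq_bot_of_notMem hyL inferInstance
  rw [← LinearMap.le_ker_iff_map] at hfL hgL
  have hfA : ¬ A ≤ LinearMap.ker f := fun h => hfx (h hxA)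
  have hgB : ¬ B ≤ LinearMap.ker g := fun h => hgy (h hyB)
  by_cases hfB : B ≤ LinearMap.ker f
  · by_cases hgA : A ≤ LinearMap.ker g
    · -- on `A` the sum is `f`, on `B` it is `g`
      refine ⟨f + g, fun z hz => ?_, fun h => hfx ?_, fun h => hgy ?_⟩
      · simp [LinearMap.mem_ker.mp (hfL hz), LinearMap.mem_ker.mp (hgL hz)]
      · simpa [LinearMap.mem_ker.mp (hgA hxA)] using h hxA
      · simpa [LinearMap.mem_ker.mp (hfB hyB)] using h hyB
    · exact ⟨g, hgL, hgA, hgB⟩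
  · exact ⟨f, hfL, hfA, hfB⟩

section SolomonStiffler

variable {F : Type} [Field F] {V : Type*} [AddCommGroup V] [Module F V] {A B : Submodule F V}
  {n : ℕ}

noncomputable def columns (e : Fin n ≃ {P : ℙ F V // P.rep ∉ A ∧ P.rep ∉ B}) : Fin n → V :=
  fun i => (e i).1.rep

theorem natCard_columns_notMem (e : Fin n ≃ {P : ℙ F V // P.rep ∉ A ∧ P.rep ∉ B})
    (K : Submodule F V) :
    Nat.card {i // columns e i ∉ K} =
      Nat.card {P : ℙ F V // P.rep ∉ A ∧ P.rep ∉ B ∧ P.rep ∉ K} :=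
  Nat.card_congr <| (e.subtypeEquiv fun _ => Iff.rfl).trans <|
    (Equiv.subtypeSubtypeEquivSubtypeInter _ fun P => P.rep ∉ K).trans <|
      Equiv.subtypeEquivRight fun _ => and_assoc

variable [Finite F] [FiniteDimensional F V]

variable (F) in
theorem natCard_sub_one_pos : (0 : ℤ) < Nat.card F - 1 := by
  have : 1 < Nat.card F := Finite.one_lt_card
  omega

theorem sub_one_mul_natCard_columns_notMem (e : Fin n ≃ {P : ℙ F V // P.rep ∉ A ∧ P.rep ∉ B})
    (hL : finrank F ↥(A ⊓ B) = 1) (K : Submodule F V) :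
    ((Nat.card F : ℤ) - 1) * Nat.card {i // columns e i ∉ K} =
      Nat.card F ^ finrank F V - Nat.card F ^ finrank F A - Nat.card F ^ finrank F B
        + Nat.card F - Nat.card F ^ finrank F K + Nat.card F ^ finrank F ↥(A ⊓ K)
        + Nat.card F ^ finrank F ↥(B ⊓ K) - Nat.card F ^ finrank F ↥(A ⊓ B ⊓ K) := by
  rw [natCard_columns_notMem, sub_one_mul_natCard_rep_notMem, hL]
  ring

theorem natCard_columns_notMem_ge (e : Fin n ≃ {P : ℙ F V // P.rep ∉ A ∧ P.rep ∉ B})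
    (hL : finrank F ↥(A ⊓ B) = 1) (h12 : 1 < finrank F A) (h23 : finrank F A < finrank F B)
    (h3k : finrank F B < finrank F V) {K : Submodule F V} (hK : finrank F K + 1 = finrank F V) :
    Nat.card F ^ (finrank F V - 1) - Nat.card F ^ (finrank F A - 1)
        - Nat.card F ^ (finrank F B - 1) ≤ Nat.card {i // columns e i ∉ K} := by
  have hq : 1 ≤ (Nat.card F : ℤ) := by linarith [natCard_sub_one_pos F]
  have ha := finrank_inf_mem_interDimRange (inf_le_left : A ⊓ B ≤ A) hL hK
  have hb := finrank_inf_mem_interDimRange (inf_le_right : A ⊓ B ≤ B) hL hK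
  have hc : finrank F ↥(A ⊓ B ⊓ K) ≤ 1 := hL ▸ Submodule.finrank_mono inf_le_left
  rw [interDimRange, Finset.mem_Icc] at ha hb
  have hqa : (Nat.card F : ℤ) ^ (finrank F A - 1) ≤ Nat.card F ^ finrank F ↥(A ⊓ K) :=
    pow_le_pow_right₀ hq (by omega)
  have hqb : (Nat.card F : ℤ) ^ (finrank F B - 1) ≤ Nat.card F ^ finrank F ↥(B ⊓ K) :=
    pow_le_pow_right₀ hq (by omega)
  have hqc : (Nat.card F : ℤ) ^ finrank F ↥(A ⊓ B ⊓ K) ≤ Nat.card F ^ 1 := pow_le_pow_right₀ hq hc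
  refine Nat.cast_le.mp (le_of_mul_le_mul_left ?_ (natCard_sub_one_pos F))
  rw [sub_one_mul_cast_pow_sub_pow_sub_pow (Finite.one_lt_card (α := F)) h12 h23 h3k,
    sub_one_mul_natCard_columns_notMem e hL K, show finrank F K = finrank F V - 1 by omega]
  linarith

theorem natCard_columns_notMem_ker_eq (e : Fin n ≃ {P : ℙ F V // P.rep ∉ A ∧ P.rep ∉ B})
    (hL : finrank F ↥(A ⊓ B) = 1) (h12 : 1 < finrank F A) (h23 : finrank F A < finrank F B)
    (h3k : finrank F B < finrank F V) {f : Dual F V} (hLf : A ⊓ B ≤ LinearMap.ker f)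
    (hAf : ¬ A ≤ LinearMap.ker f) (hBf : ¬ B ≤ LinearMap.ker f) :
    Nat.card {i // columns e i ∉ LinearMap.ker f} = Nat.card F ^ (finrank F V - 1)
      - Nat.card F ^ (finrank F A - 1) - Nat.card F ^ (finrank F B - 1) := by
  have hK := f.finrank_ker_add_one_of_ne_zero (by rintro rfl; exact hAf (by simp))
  have ha := finrank_inf_mem_interDimRange (inf_le_left : A ⊓ B ≤ A) hL hK
  have hb := finrank_inf_mem_interDimRange (inf_le_right : A ⊓ B ≤ B) hL hK
  rw [interDimRange, Finset.mem_Icc] at ha hb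
  have ha' := Submodule.finrank_lt_finrank_of_lt (inf_lt_left.mpr hAf)
  have hb' := Submodule.finrank_lt_finrank_of_lt (inf_lt_left.mpr hBf)
  refine Nat.cast_injective (R := ℤ) (mul_left_cancel₀ (natCard_sub_one_pos F).ne' ?_)
  rw [sub_one_mul_cast_pow_sub_pow_sub_pow (Finite.one_lt_card (α := F)) h12 h23 h3k,
    sub_one_mul_natCard_columns_notMem e hL, inf_eq_left.mpr hLf, hL,
    show finrank F (LinearMap.ker f) = finrank F V - 1 by omega,
    show finrank F ↥(A ⊓ LinearMap.ker f) = finrank F A - 1 by omega,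
    show finrank F ↥(B ⊓ LinearMap.ker f) = finrank F B - 1 by omega]
  ring

theorem evalMap_columns_injective (e : Fin n ≃ {P : ℙ F V // P.rep ∉ A ∧ P.rep ∉ B})
    (hL : finrank F ↥(A ⊓ B) = 1) (h12 : 1 < finrank F A) (h23 : finrank F A < finrank F B)
    (h3k : finrank F B < finrank F V) : Function.Injective (evalMap F (columns e)) := by
  rw [injective_iff_map_eq_zero]
  intro f hf
  by_contra hf0
  have hge := natCard_columns_notMem_ge e hL h12 h23 h3k (f.finrank_ker_add_one_of_ne_zero hf0)
  rw [← hwt_evalMap, hf, hwt_zero] at hge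
  have := Nat.pow_add_pow_lt_pow (Finite.one_lt_card (α := F))
    (by omega : finrank F A - 1 < finrank F B - 1) (by omega : finrank F B - 1 < finrank F V - 1)
  omega

theorem minDist_range_evalMap_columns (e : Fin n ≃ {P : ℙ F V // P.rep ∉ A ∧ P.rep ∉ B})
    (hL : finrank F ↥(A ⊓ B) = 1) (h12 : 1 < finrank F A) (h23 : finrank F A < finrank F B)
    (h3k : finrank F B < finrank F V) :
    minDist (LinearMap.range (evalMap F (columns e))) = Nat.card F ^ (finrank F V - 1)
      - Nat.card F ^ (finrank F A - 1) - Nat.card F ^ (finrank F B - 1) := by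
  have hLA : A ⊓ B < A := inf_le_left.lt_of_ne fun h => by rw [h] at hL; omega
  have hLB : A ⊓ B < B := inf_le_right.lt_of_ne fun h => by rw [h] at hL; omega
  obtain ⟨f, hLf, hAf, hBf⟩ := Submodule.exists_dual_le_ker_not_le_ker hLA hLB
  have hinj := evalMap_columns_injective e hL h12 h23 h3k
  refine minDist_eq_of_forall_le ?_ ⟨_, ⟨f, rfl⟩, ?_, ?_⟩
  · rintro _ ⟨g, rfl⟩ hg
    have hg0 : g ≠ 0 := by rintro rfl; exact hg (map_zero _)
    exact natCard_columns_notMem_ge e hL h12 h23 h3k (g.finrank_ker_add_one_of_ne_zero hg0)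
  · exact (map_ne_zero_iff _ hinj).mpr (by rintro rfl; exact hAf (by simp))
  · exact natCard_columns_notMem_ker_eq e hL h12 h23 h3k hLf hAf hBf

theorem ncard_sswd_range_evalMap_columns_ne_zero_le
    (e : Fin n ≃ {P : ℙ F V // P.rep ∉ A ∧ P.rep ∉ B}) (hL : finrank F ↥(A ⊓ B) = 1)
    (hinj : Function.Injective (evalMap F (columns e))) (r : ℕ) :
    {j | sswd (LinearMap.range (evalMap F (columns e))) r j ≠ 0}.ncard ≤
      2 * min (finrank F A * finrank F B)
        (min ((r + 1) ^ 2) ((finrank F V - r + 1) ^ 2)) := by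
  have hA : 1 ≤ finrank F A := hL ▸ Submodule.finrank_mono inf_le_left
  have hB : 1 ≤ finrank F B := hL ▸ Submodule.finrank_mono inf_le_right
  -- the weight of a subcode is determined by the dimensions of `A ⊓ K`, `B ⊓ K`, `A ⊓ B ⊓ K`
  refine ncard_le_of_forall_eq_interDimRange hA hB (fun a b c =>
    ((Nat.card F ^ finrank F V - Nat.card F ^ finrank F A - Nat.card F ^ finrank F B
      + Nat.card F - Nat.card F ^ (finrank F V - r) + Nat.card F ^ a + Nat.card F ^ b
      - Nat.card F ^ c : ℤ) / (Nat.card F - 1)).toNat) fun j hj => ?_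
  obtain ⟨⟨U, hUC, hUr, rfl⟩⟩ := (Nat.card_ne_zero.mp hj).1
  obtain ⟨K, hK, hw⟩ := exists_suppWt_eq_of_le_range_evalMap hinj hUC
  rw [hUr] at hK
  refine ⟨_, hL ▸ Submodule.finrank_mono inf_le_left, _,
    finrank_inf_mem_interDimRange inf_le_left hL hK, _,
    finrank_inf_mem_interDimRange inf_le_right hL hK, ?_⟩
  have hE := sub_one_mul_natCard_columns_notMem e hL K
  rw [show finrank F K = finrank F V - r by omega] at hE
  rw [hw, ← hE, Int.mul_ediv_cancel_left _ (natCard_sub_one_pos F).ne', Int.toNat_natCast]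

theorem natCard_rep_notMem_eq (hL : finrank F ↥(A ⊓ B) = 1) (h23 : finrank F A < finrank F B)
    (h3k : finrank F B < finrank F V) :
    Nat.card {P : ℙ F V // P.rep ∉ A ∧ P.rep ∉ B} =
      (Nat.card F ^ finrank F V - 1) / (Nat.card F - 1)
        - (Nat.card F ^ finrank F A - 1) / (Nat.card F - 1)
        - (Nat.card F ^ finrank F B - 1) / (Nat.card F - 1) + 1 := by
  have hq : 2 ≤ Nat.card F := Finite.one_lt_card
  have hbot (X : Submodule F V) : finrank F ↥(X ⊓ ⊥) = 0 := by rw [inf_bot_eq, finrank_bot]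
  have hcount := sub_one_mul_natCard_rep_notMem A B ⊥
  simp only [hbot, finrank_bot, pow_zero, hL, Submodule.mem_bot, rep_nonzero,
    not_false_eq_true, and_true] at hcount
  refine Nat.cast_injective (R := ℤ) (mul_left_cancel₀ (natCard_sub_one_pos F).ne' ?_)
  rw [hcount, sub_one_mul_cast_length hq (Nat.pow_add_pow_lt_pow hq h23 h3k)]
  ring

end SolomonStiffler

/-- Corollary `3`: the modified Solomon-Stiffler code has few subcode
support weights in every dimension `r`. -/
theorem stmt_17 (q : ℕ) (F : Type) [Field F] [Fintype F] (hq : Fintype.card F = q)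
    (k u2 u3 : ℕ) (h12 : 1 < u2) (h23 : u2 < u3) (h3k : u3 < k) (h23k : u2 + u3 ≤ k + 1) :
    ∃ C : Submodule F
        (Fin ((q ^ k - 1) / (q - 1) - (q ^ u2 - 1) / (q - 1) - (q ^ u3 - 1) / (q - 1) + 1) → F),
      Module.finrank F ↥C = k ∧
      minDist C = q ^ (k - 1) - q ^ (u2 - 1) - q ^ (u3 - 1) ∧
      ∀ r, 1 ≤ r → r ≤ k →
        {j : ℕ | sswd C r j ≠ 0}.ncard ≤
          2 * min (u2 * u3) (min ((r + 1) ^ 2) ((k - r + 1) ^ 2)) := by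
  obtain ⟨A, B, rfl, rfl, hL⟩ :=
    exists_submodules_finrank_inf_eq_one (F := F) (k := k) (by omega) (by omega) h23k
  obtain rfl : Nat.card F = q := Nat.card_eq_fintype_card.trans hq
  have hV : finrank F (Fin k →₀ F) = k := by simp
  have h3k' : finrank F B < finrank F (Fin k →₀ F) := by rwa [hV]
  have hn := natCard_rep_notMem_eq hL h23 h3k'
  rw [hV] at hn
  let e := (Finite.equivFinOfCardEq hn).symm
  have hinj := evalMap_columns_injective e hL h12 h23 h3k'
  refine ⟨_, (finrank_range_evalMap hinj).trans hV, ?_, fun r _ _ => ?_⟩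
  · rw [minDist_range_evalMap_columns e hL h12 h23 h3k', hV]
  · simpa only [hV] using ncard_sswd_range_evalMap_columns_ne_zero_le e hL hinj r
end

section
/- Let q be a prime power and let integers satisfy 3 ≤ k ≤ m ≤ q. Set n = (q^k - 1)/(q - 1) - m. Then there exists an [n,k]_q linear code C with minimum Hamming distance q^{k-1} - m whose weight distribution satisfies: for every j with q^{k-1} - m ≤ j ≤ q^{k-1} + k - m - 1, A_j(C) = binom(m, q^{k-1} - j) · Σ_{t=0}^{q^{k-1}+k-j-m-1} (-1)^t · binom(q^{k-1} - j, t) · (q^{q^{k-1}+k-j-m-t} - 1), where binom denotes the ordinary binomial coefficient; and A_j(C) = 0 for every other j ≥ 1. -/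
open Finset

open Matrix

section chenAux
variable {F : Type} [Field F] [Fintype F] [DecidableEq F]

/-- reversed moment-curve vector -/
def pvec (F : Type) [Field F] (k : ℕ) (a : F) : Fin k → F := fun j => a ^ (k - 1 - (j : ℕ))

lemma card_filter_eq_nat_card {α : Type} [Fintype α] (p : α → Prop) [DecidablePred p] :
    (univ.filter p).card = Nat.card {x // p x} := by
  rw [Nat.card_eq_fintype_card, Fintype.card_subtype]

omit [DecidableEq F] in
lemma nat_card_submodule {V : Type} [AddCommGroup V] [Module F V] [Fintype V]
    (W : Submodule F V) :
    Nat.card W = Fintype.card F ^ Module.finrank F W := by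
  classical
  rw [Nat.card_eq_fintype_card]
  exact Module.card_eq_pow_finrank

lemma hwt_zero_s19 {G : Type} [Zero G] {n : ℕ} :
    (Nat.card {i : Fin n // (0 : Fin n → G) i ≠ 0}) = 0 := by
  haveI : IsEmpty {i : Fin n // (0 : Fin n → G) i ≠ 0} := ⟨fun i => i.2 rfl⟩
  exact Nat.card_of_isEmpty
lemma count_solutions {k z : ℕ} (hz : z ≤ k) (b : Fin z → F) (hb : Function.Injective b) :
    (univ.filter fun x : Fin k → F => ∀ r, x ⬝ᵥ pvec F k (b r) = 0).card
      = Fintype.card F ^ (k - z) := by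
  classical
  set M : Matrix (Fin z) (Fin k) F := fun r j => pvec F k (b r) j with hM
  have li : LinearIndependent F (fun r => pvec F k (b r)) := by
    rw [Fintype.linearIndependent_iff]
    intro g hg
    have hcoord : ∀ c : Fin z, ∑ i : Fin z, g i * (b i) ^ (c : ℕ) = 0 := by
      intro c
      have hck : (c : ℕ) < k := lt_of_lt_of_le c.2 hz
      have hc : ∀ i : Fin z, pvec F k (b i) ⟨k - 1 - (c : ℕ), by omega⟩ = b i ^ (c : ℕ) := by
        intro i
        simp only [pvec]
        congr 1
        omega
      have h2 := congrFun hg ⟨k - 1 - (c : ℕ), by omega⟩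
      simp only [Finset.sum_apply, Pi.smul_apply, smul_eq_mul, Pi.zero_apply] at h2
      rw [← h2]
      exact Finset.sum_congr rfl fun i _ => by rw [hc i]
    have := Matrix.eq_zero_of_forall_pow_sum_mul_pow_eq_zero hb (fun c => hcoord c)
    exact fun i => congrFun this i
  have hrank : M.rank = z := by
    rw [← Matrix.rank_transpose, Matrix.rank_eq_finrank_span_cols]
    rw [show (Set.range Mᵀ.col) = Set.range (fun r => pvec F k (b r)) from rfl]
    rw [finrank_span_eq_card li, Fintype.card_fin]
  set L := M.mulVecLin with hL
  have hker : ∀ x : Fin k → F, (∀ r, x ⬝ᵥ pvec F k (b r) = 0) ↔ x ∈ LinearMap.ker L := by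
    intro x
    simp only [LinearMap.mem_ker, hL, Matrix.mulVecLin_apply, funext_iff, Pi.zero_apply,
      Matrix.mulVec, dotProduct, hM]
    constructor
    · intro h r; rw [← h r]; exact (congrFun (Matrix.mulVecLin_apply _ x) r).trans ((Matrix.mulVec_apply_eq_sum _ x r).trans (Finset.sum_congr rfl fun j _ => mul_comm (pvec F k (b r) j) (x j)))
    · intro h r; rw [← h r]; exact Finset.sum_congr rfl fun j _ => mul_comm _ _
  have hfr : Module.finrank F (LinearMap.ker L) = k - z := by
    have h2 := LinearMap.finrank_range_add_finrank_ker L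
    have h3 : Module.finrank F (LinearMap.range L) = z := hrank
    simp only [Module.finrank_pi, Fintype.card_fin] at h2
    omega
  rw [card_filter_eq_nat_card]
  rw [Nat.card_congr (Equiv.subtypeEquivRight hker)]
  rw [show Nat.card {x // x ∈ LinearMap.ker L} = Nat.card (LinearMap.ker L) from rfl]
  rw [nat_card_submodule, hfr]

lemma count_s {k m : ℕ} (a : Fin m → F) (ha : Function.Injective a) (s : Finset (Fin m))
    (hs : s.card ≤ k) :
    (univ.filter fun x : Fin k → F => ∀ i ∈ s, x ⬝ᵥ pvec F k (a i) = 0).card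
      = Fintype.card F ^ (k - s.card) := by
  classical
  let e := s.equivFin
  let b : Fin s.card → F := fun r => a ((e.symm r : {x // x ∈ s}) : Fin m)
  have hb : Function.Injective b := by
    intro r r' h
    have := ha h
    exact e.symm.injective (Subtype.val_injective this)
  rw [← count_solutions hs b hb]
  congr 1
  ext x
  simp only [mem_filter, mem_univ, true_and]
  constructor
  · intro h r
    exact h _ (e.symm r).2
  · intro h i hi
    have := h (e ⟨i, hi⟩)
    simpa only [b, Equiv.symm_apply_apply] using this

lemma eq_zero_of_vanish {k m : ℕ} (a : Fin m → F) (ha : Function.Injective a)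
    (s : Finset (Fin m)) (hs : s.card = k) (x : Fin k → F)
    (hx : ∀ i ∈ s, x ⬝ᵥ pvec F k (a i) = 0) : x = 0 := by
  classical
  have h1 := count_s a ha s (le_of_eq hs)
  rw [hs, Nat.sub_self, pow_zero] at h1
  have h0 : (0 : Fin k → F) ∈ univ.filter fun x : Fin k → F => ∀ i ∈ s, x ⬝ᵥ pvec F k (a i) = 0 := by
    simp [zero_dotProduct]
  have hxm : x ∈ univ.filter fun x : Fin k → F => ∀ i ∈ s, x ⬝ᵥ pvec F k (a i) = 0 := by
    simp only [mem_filter, mem_univ, true_and]; exact hx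
  exact Finset.card_le_one.mp (le_of_eq h1) _ hxm _ h0

lemma count_big {k m : ℕ} (a : Fin m → F) (ha : Function.Injective a)
    (u : Finset (Fin m)) (hu : k ≤ u.card) :
    (univ.filter fun x : Fin k → F => ∀ i ∈ u, x ⬝ᵥ pvec F k (a i) = 0) = {0} := by
  classical
  obtain ⟨t, hts, htc⟩ := Finset.exists_subset_card_eq hu
  ext x
  simp only [mem_filter, mem_univ, true_and, mem_singleton]
  constructor
  · intro h
    exact eq_zero_of_vanish a ha t htc x (fun i hi => h i (hts hi))
  · rintro rfl i _
    exact zero_dotProduct _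

lemma countZ_eq {k m : ℕ} (a : Fin m → F) (ha : Function.Injective a) (hkm : k ≤ m)
    {z : ℕ} (hz : z < k) (s : Finset (Fin m)) (hsc : s.card = z) :
    (((univ : Finset (Fin k → F)).filter
        fun x => (univ.filter fun i => x ⬝ᵥ pvec F k (a i) = 0) = s).card : ℤ)
      = ∑ t ∈ Finset.range (k - z), (-1:ℤ)^t * ((m - z).choose t)
          * ((Fintype.card F : ℤ)^(k - z - t) - 1) := by
  classical
  set q := Fintype.card F with hqdef
  set Zx : (Fin k → F) → Finset (Fin m) := fun x => univ.filter fun i => x ⬝ᵥ pvec F k (a i) = 0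
    with hZx
  set A : Finset (Fin k → F) := univ.filter fun x => s ⊆ Zx x with hA
  -- Step 1: card as a sum of indicators over A
  have step1 : (((univ : Finset (Fin k → F)).filter fun x => Zx x = s).card : ℤ)
      = ∑ x ∈ A, (if Zx x \ s = ∅ then (1:ℤ) else 0) := by
    rw [Finset.sum_boole]
    congr 2
    rw [hA, Finset.filter_filter]
    apply Finset.filter_congr
    intro x _
    constructor
    · rintro rfl; exact ⟨Finset.Subset.refl _, Finset.sdiff_self _⟩
    · rintro ⟨h1, h2⟩
      exact Finset.Subset.antisymm (Finset.sdiff_eq_empty_iff_subset.mp h2) h1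
  -- Step 2+3: indicator as powerset sum over (univ \ s)
  have step2 : ∀ x ∈ A, (if Zx x \ s = ∅ then (1:ℤ) else 0)
      = ∑ T ∈ ((univ : Finset (Fin m)) \ s).powerset,
          (if T ⊆ Zx x then (-1:ℤ)^T.card else 0) := by
    intro x hxA
    rw [hA, mem_filter] at hxA
    rw [← Finset.sum_powerset_neg_one_pow_card (x := Zx x \ s)]
    have h1 : ∑ T ∈ (Zx x \ s).powerset, (-1:ℤ)^T.card
        = ∑ T ∈ (Zx x \ s).powerset, (if T ⊆ Zx x then (-1:ℤ)^T.card else 0) := by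
      apply Finset.sum_congr rfl
      intro T hT
      rw [Finset.mem_powerset] at hT
      rw [if_pos (hT.trans Finset.sdiff_subset)]
    rw [h1]
    apply Finset.sum_subset
    · exact Finset.powerset_mono.mpr (Finset.sdiff_subset_sdiff (Finset.subset_univ _) (Finset.Subset.refl _))
    · intro T hT hTn
      rw [Finset.mem_powerset] at hT hTn
      rw [if_neg]
      intro hTZ
      exact hTn (Finset.subset_sdiff.mpr ⟨hTZ, (Finset.subset_sdiff.mp hT).2⟩)
  -- the count function
  have hcount : ∀ T ∈ ((univ : Finset (Fin m)) \ s).powerset,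
      ((A.filter fun x => T ⊆ Zx x).card : ℤ)
        = (if z + T.card ≤ k then (q:ℤ)^(k - z - T.card) else 1) := by
    intro T hT
    rw [Finset.mem_powerset] at hT
    have hdisj : Disjoint T s := (Finset.subset_sdiff.mp hT).2
    have hfe : (A.filter fun x => T ⊆ Zx x)
        = univ.filter (fun x : Fin k → F => ∀ i ∈ s ∪ T, x ⬝ᵥ pvec F k (a i) = 0) := by
      rw [hA, Finset.filter_filter]
      apply Finset.filter_congr
      intro x _
      constructor
      · rintro ⟨h1, h2⟩ i hi
        rcases Finset.mem_union.mp hi with hi | hi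
        · exact (Finset.mem_filter.mp (h1 hi)).2
        · exact (Finset.mem_filter.mp (h2 hi)).2
      · intro h
        constructor <;> intro i hi <;> simp only [hZx, Finset.mem_filter, Finset.mem_univ, true_and]
        · exact h i (Finset.mem_union_left _ hi)
        · exact h i (Finset.mem_union_right _ hi)
    have hcu : (s ∪ T).card = z + T.card := by
      rw [Finset.card_union_of_disjoint hdisj.symm, hsc]
    rw [hfe]
    by_cases hle : z + T.card ≤ k
    · rw [count_s a ha _ (by rw [hcu]; exact hle), hcu, if_pos hle]
      push_cast
      congr 1
      omega
    · rw [count_big a ha _ (by omega), if_neg hle]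
      simp
  -- assemble: the count equals a powerset sum
  have step4 : (((univ : Finset (Fin k → F)).filter fun x => Zx x = s).card : ℤ)
      = ∑ T ∈ ((univ : Finset (Fin m)) \ s).powerset,
          (-1:ℤ)^T.card * (if z + T.card ≤ k then (q:ℤ)^(k - z - T.card) else 1) := by
    rw [step1, Finset.sum_congr rfl step2, Finset.sum_comm]
    apply Finset.sum_congr rfl
    intro T hT
    rw [← Finset.sum_filter, Finset.sum_const, ← hcount T hT]
    push_cast
    ring
  have hne : ((univ : Finset (Fin m)) \ s).Nonempty := by
    rw [← Finset.card_pos, Finset.card_sdiff_of_subset (Finset.subset_univ _), Finset.card_univ,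
      Fintype.card_fin, hsc]
    omega
  have z0 : (0:ℤ) = ∑ T ∈ ((univ : Finset (Fin m)) \ s).powerset, (-1:ℤ)^T.card :=
    (Finset.sum_powerset_neg_one_pow_card_of_nonempty hne).symm
  have step5 : (((univ : Finset (Fin k → F)).filter fun x => Zx x = s).card : ℤ)
      = ∑ T ∈ ((univ : Finset (Fin m)) \ s).powerset,
          (-1:ℤ)^T.card * ((if z + T.card ≤ k then (q:ℤ)^(k - z - T.card) else 1) - 1) := by
    rw [step4]
    have hsplit : ∑ T ∈ ((univ : Finset (Fin m)) \ s).powerset,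
          (-1:ℤ)^T.card * (if z + T.card ≤ k then (q:ℤ)^(k - z - T.card) else 1)
        = (∑ T ∈ ((univ : Finset (Fin m)) \ s).powerset,
            (-1:ℤ)^T.card * ((if z + T.card ≤ k then (q:ℤ)^(k - z - T.card) else 1) - 1))
          + ∑ T ∈ ((univ : Finset (Fin m)) \ s).powerset, (-1:ℤ)^T.card := by
      rw [← Finset.sum_add_distrib]
      apply Finset.sum_congr rfl
      intro T _
      ring
    rw [hsplit, ← z0, add_zero]
  have hcardsd : ((univ : Finset (Fin m)) \ s).card = m - z := by
    rw [Finset.card_sdiff_of_subset (Finset.subset_univ _), Finset.card_univ, Fintype.card_fin, hsc]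
  have step6 : (((univ : Finset (Fin k → F)).filter fun x => Zx x = s).card : ℤ)
      = ∑ t ∈ Finset.range ((m - z) + 1),
          ((m - z).choose t) • ((-1:ℤ)^t * ((if z + t ≤ k then (q:ℤ)^(k - z - t) else 1) - 1)) := by
    rw [step5,
      Finset.sum_powerset_apply_card (fun t => (-1:ℤ)^t * ((if z + t ≤ k then (q:ℤ)^(k - z - t) else 1) - 1)),
      hcardsd]
  rw [step6]
  rw [← Finset.sum_subset (h := Finset.range_subset_range.mpr (by omega : k - z ≤ (m - z) + 1))]
  · apply Finset.sum_congr rfl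
    intro t ht
    rw [Finset.mem_range] at ht
    rw [if_pos (by omega : z + t ≤ k), nsmul_eq_mul]
    ring
  · intro t ht htn
    rw [Finset.mem_range] at ht htn
    have hzero : (if z + t ≤ k then (q:ℤ)^(k - z - t) else 1) - 1 = 0 := by
      by_cases hle : z + t ≤ k
      · rw [if_pos hle, show k - z - t = 0 by omega, pow_zero, sub_self]
      · rw [if_neg hle, sub_self]
    rw [hzero, mul_zero, smul_zero]
lemma countZ {k m : ℕ} (a : Fin m → F) (ha : Function.Injective a) (hkm : k ≤ m)
    {z : ℕ} (hz : z < k) :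
    (((univ : Finset (Fin k → F)).filter
        fun x => (univ.filter fun i => x ⬝ᵥ pvec F k (a i) = 0).card = z).card : ℤ)
      = (m.choose z : ℤ) * ∑ t ∈ Finset.range (k - z), (-1:ℤ)^t * ((m - z).choose t)
          * ((Fintype.card F : ℤ)^(k - z - t) - 1) := by
  classical
  have hpart : ((univ : Finset (Fin k → F)).filter
        fun x => (univ.filter fun i => x ⬝ᵥ pvec F k (a i) = 0).card = z)
      = (Finset.powersetCard z (univ : Finset (Fin m))).biUnion
          (fun s => univ.filter fun x => (univ.filter fun i => x ⬝ᵥ pvec F k (a i) = 0) = s) := by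
    ext x
    simp only [mem_filter, mem_univ, true_and, mem_biUnion, Finset.mem_powersetCard]
    constructor
    · intro h
      exact ⟨_, ⟨Finset.subset_univ _, h⟩, rfl⟩
    · rintro ⟨s, ⟨-, hc⟩, rfl⟩
      exact hc
  rw [hpart, Finset.card_biUnion]
  · push_cast
    rw [Finset.sum_congr rfl (fun s hs => countZ_eq a ha hkm hz s (Finset.mem_powersetCard.mp hs).2)]
    rw [Finset.sum_const, Finset.card_powersetCard, Finset.card_univ, Fintype.card_fin,
      nsmul_eq_mul]
  · intro s hs t ht hst
    rw [Function.onFun, Finset.disjoint_left]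
    rintro x hx hy
    rw [Finset.mem_filter] at hx hy
    exact hst (hx.2.symm.trans hy.2)
def PFin (F : Type) [Field F] [Fintype F] [DecidableEq F] (k : ℕ) : Finset (Fin k → F) :=
  univ.filter (fun v => ∃ i : Fin k, v i = 1 ∧ ∀ j, i < j → v j = 0)

lemma scal_count {k : ℕ} (Q : (Fin k → F) → Prop) [DecidablePred Q]
    (hQ : ∀ (c : F), c ≠ 0 → ∀ v, (Q (c • v) ↔ Q v)) :
    (Fintype.card F - 1) * ((PFin F k).filter Q).card
      = (univ.filter fun v : Fin k → F => v ≠ 0 ∧ Q v).card := by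
  classical
  have hprod : ((univ.filter fun c : F => c ≠ 0) ×ˢ ((PFin F k).filter Q)).card
      = (Fintype.card F - 1) * ((PFin F k).filter Q).card := by
    rw [Finset.card_product]
    congr 1
    rw [Finset.filter_ne', Finset.card_erase_of_mem (mem_univ 0), Finset.card_univ]
  rw [← hprod]
  apply Finset.card_bij (fun cp _ => cp.1 • cp.2)
  · rintro ⟨c, p⟩ hcp
    dsimp only
    rw [Finset.mem_product, Finset.mem_filter, Finset.mem_filter] at hcp
    dsimp only at hcp
    obtain ⟨⟨-, hc⟩, hpP, hpQ⟩ := hcp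
    rw [PFin, Finset.mem_filter] at hpP
    obtain ⟨-, i, hi1, hi0⟩ := hpP
    rw [Finset.mem_filter]
    refine ⟨mem_univ _, ?_, (hQ c hc p).mpr hpQ⟩
    intro h0
    have := congrFun h0 i
    simp only [Pi.smul_apply, smul_eq_mul, hi1, mul_one, Pi.zero_apply] at this
    exact hc this
  · rintro ⟨c, p⟩ hcp ⟨c', p'⟩ hcp' heq
    dsimp only at heq ⊢
    rw [Finset.mem_product, Finset.mem_filter, Finset.mem_filter] at hcp hcp'
    dsimp only at hcp hcp'
    obtain ⟨⟨-, hc⟩, hpP, -⟩ := hcp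
    obtain ⟨⟨-, hc'⟩, hpP', -⟩ := hcp'
    rw [PFin, Finset.mem_filter] at hpP hpP'
    obtain ⟨-, i, hi1, hi0⟩ := hpP
    obtain ⟨-, i', hi1', hi0'⟩ := hpP'
    have hii : i = i' := by
      by_contra hne
      rcases lt_or_gt_of_ne hne with hlt | hlt
      · have h1 := congrFun heq i'
        simp only [Pi.smul_apply, smul_eq_mul, hi0 _ hlt, hi1', mul_zero, mul_one] at h1
        exact hc' h1.symm
      · have h1 := congrFun heq i
        simp only [Pi.smul_apply, smul_eq_mul, hi0' _ hlt, hi1, mul_zero, mul_one] at h1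
        exact hc h1
    subst hii
    have hcc : c = c' := by
      have h1 := congrFun heq i
      simpa only [Pi.smul_apply, smul_eq_mul, hi1, hi1', mul_one] using h1
    subst hcc
    have : p = p' := by
      funext j
      have h1 := congrFun heq j
      simp only [Pi.smul_apply, smul_eq_mul] at h1
      exact mul_left_cancel₀ hc h1
    rw [this]
  · intro v hv
    rw [Finset.mem_filter] at hv
    obtain ⟨-, hv0, hvQ⟩ := hv
    have hsupp : (univ.filter fun i => v i ≠ 0).Nonempty := by
      rw [Finset.filter_nonempty_iff]
      by_contra h
      push_neg at h
      exact hv0 (funext fun i => h i (mem_univ i))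
    set i0 := (univ.filter fun i => v i ≠ 0).max' hsupp with hi0def
    have hi0mem := (univ.filter fun i => v i ≠ 0).max'_mem hsupp
    rw [Finset.mem_filter] at hi0mem
    have hc0 : v i0 ≠ 0 := hi0mem.2
    refine ⟨(v i0, (v i0)⁻¹ • v), ?_, ?_⟩
    · rw [Finset.mem_product, Finset.mem_filter, Finset.mem_filter, PFin, Finset.mem_filter]
      refine ⟨⟨mem_univ _, hc0⟩, ⟨mem_univ _, i0, ?_, ?_⟩, ?_⟩
      · simp only [Pi.smul_apply, smul_eq_mul]
        exact inv_mul_cancel₀ hc0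
      · intro j hj
        simp only [Pi.smul_apply, smul_eq_mul]
        have hvj : v j = 0 := by
          by_contra hvj
          have : j ∈ univ.filter fun i => v i ≠ 0 := by
            rw [Finset.mem_filter]; exact ⟨mem_univ _, hvj⟩
          exact absurd (Finset.le_max' _ _ this) (not_le.mpr hj)
        rw [hvj, mul_zero]
      · exact (hQ _ (inv_ne_zero hc0) v).mpr hvQ
    · exact smul_inv_smul₀ hc0 v

lemma card_PFin {k : ℕ} (hk : 1 ≤ k) :
    (Fintype.card F - 1) * (PFin F k).card = Fintype.card F ^ k - 1 := by
  classical
  have := scal_count (F := F) (k := k) (fun _ => True) (fun c hc v => Iff.rfl)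
  simp only [Finset.filter_true, and_true] at this
  rw [this, Finset.filter_ne', Finset.card_erase_of_mem (mem_univ 0), Finset.card_univ,
    Fintype.card_fun, Fintype.card_fin]

lemma card_hyperplane {k : ℕ} (x : Fin k → F) (hx : x ≠ 0) :
    (univ.filter fun v : Fin k → F => x ⬝ᵥ v = 0).card = Fintype.card F ^ (k - 1) := by
  classical
  let L : (Fin k → F) →ₗ[F] F :=
    { toFun := fun v => x ⬝ᵥ v
      map_add' := fun u v => dotProduct_add x u v
      map_smul' := fun c v => by simp [dotProduct_smul, smul_eq_mul] }
  have hsurj : Function.Surjective L := by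
    obtain ⟨j, hj⟩ : ∃ j, x j ≠ 0 := by
      by_contra h
      push_neg at h
      exact hx (funext h)
    intro t
    refine ⟨Pi.single j ((x j)⁻¹ * t), ?_⟩
    show x ⬝ᵥ Pi.single j ((x j)⁻¹ * t) = t
    rw [dotProduct_single]
    field_simp
  have hrange : Module.finrank F (LinearMap.range L) = 1 := by
    rw [LinearMap.range_eq_top.mpr hsurj, finrank_top, Module.finrank_self]
  have hk1 : 1 ≤ k := by
    by_contra h
    push_neg at h
    interval_cases k
    exact hx (funext fun i => absurd i.2 (Nat.not_lt_zero _))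
  have hker : Module.finrank F (LinearMap.ker L) = k - 1 := by
    have h2 := LinearMap.finrank_range_add_finrank_ker L
    simp only [Module.finrank_pi, Fintype.card_fin, hrange] at h2
    omega
  rw [card_filter_eq_nat_card]
  have : ∀ v : Fin k → F, (x ⬝ᵥ v = 0) ↔ v ∈ LinearMap.ker L := by
    intro v; simp [L, LinearMap.mem_ker]
  rw [Nat.card_congr (Equiv.subtypeEquivRight this)]
  rw [show Nat.card {v // v ∈ LinearMap.ker L} = Nat.card (LinearMap.ker L) from rfl]
  rw [nat_card_submodule, hker]
lemma count_P_x {k : ℕ} (hk : 1 ≤ k) (x : Fin k → F) (hx : x ≠ 0) :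
    ((PFin F k).filter fun v => x ⬝ᵥ v ≠ 0).card = Fintype.card F ^ (k - 1) := by
  classical
  set q := Fintype.card F with hq
  have hq2 : 2 ≤ q := Fintype.one_lt_card
  have h1 := scal_count (F := F) (k := k) (fun v => x ⬝ᵥ v ≠ 0)
    (fun c hc v => by rw [dotProduct_smul, smul_eq_mul, mul_ne_zero_iff]; simp [hc])
  have h2 : (univ.filter fun v : Fin k → F => v ≠ 0 ∧ x ⬝ᵥ v ≠ 0)
      = univ.filter fun v : Fin k → F => x ⬝ᵥ v ≠ 0 := by
    apply Finset.filter_congr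
    intro v _
    constructor
    · exact fun h => h.2
    · intro h
      refine ⟨?_, h⟩
      rintro rfl
      exact h (dotProduct_zero x)
  have h3 : (univ.filter fun v : Fin k → F => x ⬝ᵥ v ≠ 0).card = q ^ k - q ^ (k - 1) := by
    have : (univ.filter fun v : Fin k → F => x ⬝ᵥ v ≠ 0)
        = univ \ (univ.filter fun v : Fin k → F => x ⬝ᵥ v = 0) := by
      rw [← Finset.filter_not]
    rw [this, Finset.card_sdiff_of_subset (Finset.filter_subset _ _), Finset.card_univ, Fintype.card_fun,
      Fintype.card_fin, card_hyperplane x hx]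
  rw [h2, h3] at h1
  have h4 : q ^ k - q ^ (k - 1) = (q - 1) * q ^ (k - 1) := by
    have : q ^ k = q * q ^ (k - 1) := by
      rw [← pow_succ']
      congr 1
      omega
    rw [this, Nat.sub_mul, one_mul]
  rw [h4] at h1
  exact Nat.eq_of_mul_eq_mul_left (by omega) h1
end chenAux

/-- Theorem `chen` (d): the weight distribution of the simplex
complement code of a GRS code. -/
theorem stmt_19 (q : ℕ) (F : Type) [Field F] [Fintype F] (hq : Fintype.card F = q)
    (k m : ℕ) (hk : 3 ≤ k) (hkm : k ≤ m) (hmq : m ≤ q) :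
    ∃ C : Submodule F (Fin ((q ^ k - 1) / (q - 1) - m) → F),
      Module.finrank F ↥C = k ∧
      minDist C = q ^ (k - 1) - m ∧
      (∀ j, q ^ (k - 1) - m ≤ j → j ≤ q ^ (k - 1) + k - m - 1 →
        (wdist C j : ℤ) =
          (Nat.choose m (q ^ (k - 1) - j) : ℤ) *
            ∑ t ∈ Finset.range (q ^ (k - 1) + k - j - m),
              (-1 : ℤ) ^ t * (Nat.choose (q ^ (k - 1) - j) t : ℤ) *
                ((q : ℤ) ^ (q ^ (k - 1) + k - j - m - t) - 1)) ∧
      (∀ j, 1 ≤ j → (j < q ^ (k - 1) - m ∨ q ^ (k - 1) + k - m - 1 < j) →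
        wdist C j = 0) := by
  classical
  subst hq
  have hq2 : 2 ≤ Fintype.card F := Fintype.one_lt_card
  have hk1 : 1 ≤ k := by omega
  have hqk1 : Fintype.card F ^ k = Fintype.card F * Fintype.card F ^ (k - 1) := by
    rw [← pow_succ']
    congr 1
    omega
  have hq1k : 1 ≤ Fintype.card F ^ (k - 1) := Nat.one_le_pow _ _ (by omega)
  have hqltq : Fintype.card F < Fintype.card F ^ (k - 1) := by
    calc Fintype.card F = Fintype.card F ^ 1 := (pow_one (Fintype.card F)).symm
    _ < Fintype.card F ^ (k - 1) := Nat.pow_lt_pow_right (by omega) (by omega)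
  have hmqk : m < Fintype.card F ^ (k - 1) := lt_of_le_of_lt hmq hqltq
  -- arc parameters
  obtain ⟨emb⟩ : Nonempty (Fin m ↪ F) :=
    Function.Embedding.nonempty_of_card_le (by simpa using hmq)
  set a : Fin m → F := ⇑emb with ha'
  have ha : Function.Injective a := emb.injective
  set p : Fin m → (Fin k → F) := fun i => pvec F k (a i) with hp
  have hpinj : Function.Injective p := by
    intro i i' h
    apply ha
    have h2 := congrFun h ⟨k - 2, by omega⟩
    simp only [hp, pvec] at h2
    rw [show k - 1 - (k - 2) = 1 by omega] at h2
    simpa using h2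
  have hpne : ∀ i, p i ≠ 0 := by
    intro i hcon
    have h2 := congrFun hcon ⟨k - 1, by omega⟩
    simp only [hp, pvec, Pi.zero_apply] at h2
    rw [show k - 1 - (k - 1) = 0 by omega, pow_zero] at h2
    exact one_ne_zero h2
  have harcP : ∀ i, p i ∈ PFin F k := by
    intro i
    rw [PFin, Finset.mem_filter]
    refine ⟨mem_univ _, ⟨k - 1, by omega⟩, ?_, ?_⟩
    · simp only [hp, pvec]
      rw [show k - 1 - (k - 1) = 0 by omega, pow_zero]
    · intro j hj
      exfalso
      rw [Fin.lt_def] at hj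
      have := j.2
      simp only at hj
      omega
  set arc : Finset (Fin k → F) := univ.image p with harc
  have harcsub : arc ⊆ PFin F k := by
    intro v hv
    rw [harc, Finset.mem_image] at hv
    obtain ⟨i, -, rfl⟩ := hv
    exact harcP i
  have harccard : arc.card = m := by
    rw [harc, Finset.card_image_of_injective _ hpinj, Finset.card_univ, Fintype.card_fin]
  have hPcard : (Fintype.card F - 1) * (PFin F k).card = Fintype.card F ^ k - 1 := card_PFin hk1
  set n := (Fintype.card F ^ k - 1) / (Fintype.card F - 1) - m with hn
  set S : Finset (Fin k → F) := PFin F k \ arc with hS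
  have hPcard' : (PFin F k).card = (Fintype.card F ^ k - 1) / (Fintype.card F - 1) := by
    symm
    apply Nat.div_eq_of_eq_mul_left (by omega)
    rw [← hPcard, mul_comm]
  have hScard : S.card = n := by
    rw [hS, Finset.card_sdiff_of_subset harcsub, hn, harccard, hPcard']
  -- the code
  set e : Fin n ≃ {v // v ∈ S} := (finCongr hScard.symm).trans S.equivFin.symm with he
  set φ : (Fin k → F) →ₗ[F] (Fin n → F) :=
    { toFun := fun x => fun i => x ⬝ᵥ (e i : Fin k → F)
      map_add' := fun u v => funext fun i => add_dotProduct u v _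
      map_smul' := fun c v => funext fun i => smul_dotProduct c v _ } with hφ
  have hφ0 : ∀ x i, φ x i = x ⬝ᵥ (e i : Fin k → F) := fun x i => rfl
  -- Hamming weight of codewords
  have hwt_eq : ∀ x : Fin k → F, hwt (φ x) = (S.filter fun v => x ⬝ᵥ v ≠ 0).card := by
    intro x
    have hfset : (S.filter fun v => x ⬝ᵥ v ≠ 0)
        = univ.filter (fun v : Fin k → F => v ∈ S ∧ x ⬝ᵥ v ≠ 0) := by
      ext v
      simp only [Finset.mem_filter, Finset.mem_univ, true_and]
    rw [hwt, hfset, card_filter_eq_nat_card]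
    apply Nat.card_congr
    refine Equiv.ofBijective
      (fun i => ⟨(e i.1 : Fin k → F), (e i.1).2, by have := i.2; rwa [hφ0] at this⟩) ?_
    constructor
    · rintro ⟨i, hi⟩ ⟨i', hi'⟩ h
      simp only [Subtype.mk.injEq] at h ⊢
      exact e.injective (Subtype.val_injective h)
    · rintro ⟨v, hvS, hvx⟩
      refine ⟨⟨e.symm ⟨v, hvS⟩, ?_⟩, ?_⟩
      · rw [hφ0, Equiv.apply_symm_apply]
        exact hvx
      · simp only [Equiv.apply_symm_apply]
  -- the zero set of x in the arc
  have key : ∀ x : Fin k → F, x ≠ 0 →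
      hwt (φ x) = Fintype.card F ^ (k - 1) - m + (univ.filter fun i => x ⬝ᵥ p i = 0).card := by
    intro x hx
    rw [hwt_eq]
    have hsplit : S.filter (fun v => x ⬝ᵥ v ≠ 0)
        = (PFin F k).filter (fun v => x ⬝ᵥ v ≠ 0) \ arc.filter (fun v => x ⬝ᵥ v ≠ 0) := by
      rw [hS]
      ext v
      simp only [Finset.mem_filter, Finset.mem_sdiff]
      tauto
    rw [hsplit, Finset.card_sdiff_of_subset (Finset.filter_subset_filter _ harcsub), count_P_x hk1 x hx]
    have h5 : arc.filter (fun v => x ⬝ᵥ v ≠ 0) = (univ.filter fun i => x ⬝ᵥ p i ≠ 0).image p := by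
      rw [harc, Finset.filter_image]
    have h6 : (arc.filter (fun v => x ⬝ᵥ v ≠ 0)).card
        = m - (univ.filter fun i => x ⬝ᵥ p i = 0).card := by
      rw [h5, Finset.card_image_of_injective _ hpinj]
      have h7 : (univ.filter fun i => x ⬝ᵥ p i ≠ 0)
          = univ \ (univ.filter fun i => x ⬝ᵥ p i = 0) := by
        rw [← Finset.filter_not]
      rw [h7, Finset.card_sdiff_of_subset (Finset.filter_subset _ _), Finset.card_univ, Fintype.card_fin]
    rw [h6]
    have hzm : (univ.filter fun i => x ⬝ᵥ p i = 0).card ≤ m := by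
      calc (univ.filter fun i => x ⬝ᵥ p i = 0).card ≤ (univ : Finset (Fin m)).card :=
            Finset.card_filter_le _ _
      _ = m := by rw [Finset.card_univ, Fintype.card_fin]
    omega
  have hZbound : ∀ x : Fin k → F, x ≠ 0 → (univ.filter fun i => x ⬝ᵥ p i = 0).card < k := by
    intro x hx
    by_contra hcon
    push_neg at hcon
    obtain ⟨t, hts, htc⟩ := Finset.exists_subset_card_eq hcon
    apply hx
    apply eq_zero_of_vanish a ha t htc x
    intro i hi
    have := hts hi
    rw [Finset.mem_filter] at this
    exact this.2
  have hφinj : Function.Injective φ := by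
    rw [← LinearMap.ker_eq_bot]
    rw [eq_bot_iff]
    intro x hx
    rw [LinearMap.mem_ker] at hx
    rw [Submodule.mem_bot]
    by_contra hx0
    have h1 := key x hx0
    rw [hx] at h1
    have h2 : hwt (0 : Fin n → F) = 0 := hwt_zero_s19
    omega
  -- weight distribution via x
  have hwdist : ∀ j, wdist (LinearMap.range φ) j
      = (univ.filter fun x : Fin k → F => hwt (φ x) = j).card := by
    intro j
    rw [wdist, card_filter_eq_nat_card]
    apply Nat.card_congr
    refine (Equiv.ofBijective (fun x : {x : Fin k → F // hwt (φ x) = j} =>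
      (⟨φ x.1, ⟨x.1, rfl⟩, x.2⟩ : {c : Fin n → F // c ∈ LinearMap.range φ ∧ hwt c = j})) ?_).symm
    constructor
    · rintro ⟨x, hx⟩ ⟨y, hy⟩ h
      simp only [Subtype.mk.injEq] at h ⊢
      exact hφinj h
    · rintro ⟨c, ⟨x, rfl⟩, hc⟩
      exact ⟨⟨x, hc⟩, rfl⟩
  have hZ0univ : (univ.filter fun i => (0 : Fin k → F) ⬝ᵥ p i = 0) = univ := by
    apply Finset.filter_true_of_mem
    intro i _
    exact zero_dotProduct _
  refine ⟨LinearMap.range φ, ?_, ?_, ?_, ?_⟩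
  · rw [LinearMap.finrank_range_of_inj hφinj]
    simp [Module.finrank_pi]
  · -- minimum distance
    have hexists : ∃ x : Fin k → F, x ≠ 0 ∧ (univ.filter fun i => x ⬝ᵥ p i = 0) = ∅ := by
      by_contra hcon
      push_neg at hcon
      have hsub : (univ.filter fun x : Fin k → F => x ≠ 0)
          ⊆ (univ : Finset (Fin m)).biUnion
              (fun i => (univ.filter fun x : Fin k → F => x ⬝ᵥ p i = 0).erase 0) := by
        intro x hx
        rw [Finset.mem_filter] at hx
        obtain ⟨-, hx0⟩ := hx
        obtain ⟨i, hi⟩ := hcon x hx0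
        rw [Finset.mem_filter] at hi
        rw [Finset.mem_biUnion]
        exact ⟨i, mem_univ _,
          Finset.mem_erase.mpr ⟨hx0, Finset.mem_filter.mpr ⟨mem_univ _, hi.2⟩⟩⟩
      have hle := Finset.card_le_card hsub
      have hlhs : (univ.filter fun x : Fin k → F => x ≠ 0).card = Fintype.card F ^ k - 1 := by
        rw [Finset.filter_ne', Finset.card_erase_of_mem (mem_univ 0), Finset.card_univ,
          Fintype.card_fun, Fintype.card_fin]
      have hterm : ∀ i : Fin m,
          ((univ.filter fun x : Fin k → F => x ⬝ᵥ p i = 0).erase 0).card = Fintype.card F ^ (k - 1) - 1 := by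
        intro i
        have hfe : (univ.filter fun x : Fin k → F => x ⬝ᵥ p i = 0)
            = univ.filter fun x : Fin k → F => p i ⬝ᵥ x = 0 := by
          apply Finset.filter_congr
          intro x _
          rw [dotProduct_comm]
        rw [Finset.card_erase_of_mem, hfe, card_hyperplane (p i) (hpne i)]
        rw [Finset.mem_filter]
        exact ⟨mem_univ _, zero_dotProduct _⟩
      have hrhs := Finset.card_biUnion_le
        (s := (univ : Finset (Fin m)))
        (t := fun i => (univ.filter fun x : Fin k → F => x ⬝ᵥ p i = 0).erase 0)
      rw [Finset.sum_congr rfl (fun i _ => hterm i), Finset.sum_const, Finset.card_univ,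
        Fintype.card_fin, smul_eq_mul] at hrhs
      have hmul : m * (Fintype.card F ^ (k - 1) - 1) ≤ Fintype.card F * (Fintype.card F ^ (k - 1) - 1) :=
        Nat.mul_le_mul_right _ hmq
      have hqq : Fintype.card F * (Fintype.card F ^ (k - 1) - 1) = Fintype.card F ^ k - Fintype.card F := by
        rw [Nat.mul_sub, mul_one, ← hqk1]
      have hqle : Fintype.card F ≤ Fintype.card F ^ k := Nat.le_self_pow (by omega) _
      have hchain : Fintype.card F ^ k - 1 ≤ Fintype.card F ^ k - Fintype.card F := by
        rw [← hqq]
        rw [← hlhs]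
        exact le_trans hle (le_trans hrhs hmul)
      omega
    obtain ⟨x0, hx00, hZ0⟩ := hexists
    have hw0 : hwt (φ x0) = Fintype.card F ^ (k - 1) - m := by
      rw [key x0 hx00, hZ0]
      simp
    have hφx0 : φ x0 ≠ 0 := by
      intro h
      exact hx00 (hφinj (h.trans (map_zero φ).symm))
    rw [minDist]
    apply le_antisymm
    · exact Nat.sInf_le ⟨φ x0, ⟨x0, rfl⟩, hφx0, hw0⟩
    · apply le_csInf (Set.nonempty_of_mem (show _ ∈ {w | ∃ c ∈ LinearMap.range φ, c ≠ 0 ∧ hwt c = w} from ⟨φ x0, ⟨x0, rfl⟩, hφx0, hw0⟩))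
      rintro w ⟨c, hc, hc0, rfl⟩
      obtain ⟨x, rfl⟩ := hc
      have hx : x ≠ 0 := by
        rintro rfl
        exact hc0 (map_zero φ)
      rw [key x hx]
      omega
  · -- window
    intro j hj1 hj2
    set z := j - (Fintype.card F ^ (k - 1) - m) with hz
    have hjz : j = Fintype.card F ^ (k - 1) - m + z := by omega
    have hzk : z < k := by omega
    have hfilter : (univ.filter fun x : Fin k → F => hwt (φ x) = j)
        = univ.filter fun x : Fin k → F =>
            (univ.filter fun i => x ⬝ᵥ p i = 0).card = z := by
      apply Finset.filter_congr
      intro x _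
      by_cases hx : x = 0
      · subst hx
        rw [hZ0univ]
        have h2 : hwt (φ (0 : Fin k → F)) = 0 := by
          rw [map_zero]
          exact hwt_zero_s19
        rw [h2]
        rw [Finset.card_univ, Fintype.card_fin]
        constructor
        · intro h; omega
        · intro h; omega
      · rw [key x hx]
        have := hZbound x hx
        constructor
        · intro h; omega
        · intro h; omega
    rw [hwdist j, hfilter]
    rw [countZ a ha hkm hzk]
    have e1 : Fintype.card F ^ (k - 1) - j = m - z := by omega
    have e2 : Fintype.card F ^ (k - 1) + k - j - m = k - z := by omega
    rw [e1, e2]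
    rw [show ((m.choose (m - z) : ℤ)) = (m.choose z : ℤ) from by
      rw [Nat.choose_symm (show z ≤ m by omega)]]
  · -- outside
    intro j hj1 hj2
    rw [hwdist j]
    rw [Finset.card_eq_zero, Finset.filter_eq_empty_iff]
    intro x _
    by_cases hx : x = 0
    · subst hx
      rw [map_zero]
      have h2 : hwt (0 : Fin n → F) = 0 := hwt_zero_s19
      omega
    · rw [key x hx]
      have := hZbound x hx
      omega
end
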